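/- The tableaux algorithm obtained by adding the rule SA(b,d) (from b I x infer d I x) — respectively the rule SX(y,z) (from a I y infer a I z) — to the LE-ALC tableaux expansion rules is a terminating (in polynomial time), sound and complete decision procedure for the consistency of A together with the axiom ∀p (b I p ⇒ d I p) — respectively of A together with the axiom ∀p (p I y ⇒ p I z). -/

import Mathlib

/-!
Common formal infrastructure for the description logic LE-ALC:
syntax of concepts, individual names, ABox terms, the tableaux expansion
rules and completion, and the polarity-based (enriched formal context)
semantics.
-/

namespace LEALC

/-- LE-ALC concepts: `C ::= D | C₁ ∧ C₂ | C₁ ∨ C₂ | [R_□]C | ⟨R_◇⟩C`. -/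
inductive Cpt : Type
  | atom : ℕ → Cpt
  | meet : Cpt → Cpt → Cpt
  | join : Cpt → Cpt → Cpt
  | box  : Cpt → Cpt
  | dia  : Cpt → Cpt
  deriving DecidableEq

/-- Object individual names: ordinary names from `OBJ`, classifying objects
`a_C`, and the prefixed names `◇b`, `◆b` generated by the tableaux. -/
inductive ObName : Type
  | base : ℕ → ObName
  | cls  : Cpt → ObName
  | dia  : ObName → ObName
  | bdia : ObName → ObName
  deriving DecidableEq

/-- Feature individual names: ordinary names from `FEAT`, classifying features
`x_C`, and the prefixed names `□y`, `■y` generated by the tableaux. -/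
inductive FtName : Type
  | base : ℕ → FtName
  | cls  : Cpt → FtName
  | box  : FtName → FtName
  | bbox : FtName → FtName
  deriving DecidableEq

/-- `◇b`, with the identification `◇a_C = a_{◇C}`. -/
def ObName.diaS : ObName → ObName
  | .cls C => .cls (.dia C)
  | b => .dia b

/-- `□y`, with the identification `□x_C = x_{□C}`. -/
def FtName.boxS : FtName → FtName
  | .cls C => .cls (.box C)
  | y => .box y

/-- Positive (unnegated) ABox terms:
`a I x`, `a R_□ x`, `x R_◇ a`, `a : C`, `x :: C`. -/
inductive PTerm : Type
  | rI   : ObName → FtName → PTerm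
  | rbox : ObName → FtName → PTerm
  | rdia : FtName → ObName → PTerm
  | mem  : ObName → Cpt → PTerm
  | fmem : FtName → Cpt → PTerm
  deriving DecidableEq

/-- ABox terms: a positive term or its negation. -/
inductive Term : Type
  | pos : PTerm → Term
  | neg : PTerm → Term
  deriving DecidableEq

/-- The relational terms are `a I x`, `a R_□ x` and `x R_◇ a`. -/
def PTerm.IsRelational : PTerm → Prop
  | .rI _ _ => True
  | .rbox _ _ => True
  | .rdia _ _ => True
  | .mem _ _ => False
  | .fmem _ _ => False

/-- Subformulas (subconcepts) of a concept. -/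
def Cpt.subs : Cpt → Finset Cpt
  | .atom n => {Cpt.atom n}
  | .meet C₁ C₂ => insert (Cpt.meet C₁ C₂) (C₁.subs ∪ C₂.subs)
  | .join C₁ C₂ => insert (Cpt.join C₁ C₂) (C₁.subs ∪ C₂.subs)
  | .box C => insert (Cpt.box C) C.subs
  | .dia C => insert (Cpt.dia C) C.subs

/-- The concepts occurring in a term (subformulas of the concept of a
(possibly negated) membership assertion). -/
def Term.cpts : Term → Finset Cpt
  | .pos (.mem _ C) => C.subs
  | .pos (.fmem _ C) => C.subs
  | .neg (.mem _ C) => C.subs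
  | .neg (.fmem _ C) => C.subs
  | _ => ∅

/-- The concept `C` occurs in the set of terms `A`. -/
def Occurs (C : Cpt) (A : Set Term) : Prop := ∃ t ∈ A, C ∈ t.cpts

def PTerm.objs : PTerm → List ObName
  | .rI b _ => [b]
  | .rbox b _ => [b]
  | .rdia _ b => [b]
  | .mem b _ => [b]
  | .fmem _ _ => []

def PTerm.feats : PTerm → List FtName
  | .rI _ y => [y]
  | .rbox _ y => [y]
  | .rdia y _ => [y]
  | .mem _ _ => []
  | .fmem y _ => [y]

def Term.objs : Term → List ObName
  | .pos t => t.objs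
  | .neg t => t.objs

def Term.feats : Term → List FtName
  | .pos t => t.feats
  | .neg t => t.feats

/-- The object name `b` occurs in the set of terms `S`. -/
def ObOccurs (b : ObName) (S : Set Term) : Prop := ∃ t ∈ S, b ∈ t.objs

/-- The feature name `y` occurs in the set of terms `S`. -/
def FtOccurs (y : FtName) (S : Set Term) : Prop := ∃ t ∈ S, y ∈ t.feats

def ObName.IsBase (b : ObName) : Prop := ∃ n, b = ObName.base n
def FtName.IsBase (y : FtName) : Prop := ∃ n, y = FtName.base n

/-- A term all of whose individual names are ordinary (non-generated) names. -/
def Term.Plain (t : Term) : Prop :=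
  (∀ b ∈ t.objs, b.IsBase) ∧ (∀ y ∈ t.feats, y.IsBase)

/-- An ABox is a set of terms over the ordinary individual names `OBJ`/`FEAT`
(the generated names `a_C`, `x_C`, `◇b`, `◆b`, `□y`, `■y` are fresh). -/
def ABoxWF (A : Set Term) : Prop := ∀ t ∈ A, t.Plain

def Cpt.csize : Cpt → ℕ
  | .atom _ => 1
  | .meet C₁ C₂ => C₁.csize + C₂.csize + 1
  | .join C₁ C₂ => C₁.csize + C₂.csize + 1
  | .box C => C.csize + 1
  | .dia C => C.csize + 1

def PTerm.psize : PTerm → ℕ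
  | .rI _ _ => 1
  | .rbox _ _ => 1
  | .rdia _ _ => 1
  | .mem _ C => C.csize + 1
  | .fmem _ C => C.csize + 1

def Term.tsize : Term → ℕ
  | .pos t => t.psize + 1
  | .neg t => t.psize + 2

/-- The size `|A|` of an ABox. -/
def aboxSize (A : Finset Term) : ℕ := A.sum Term.tsize

/-- Box-depth of a concept. -/
def Cpt.bd : Cpt → ℕ
  | .atom _ => 0
  | .meet C₁ C₂ => max C₁.bd C₂.bd
  | .join C₁ C₂ => max C₁.bd C₂.bd
  | .box C => C.bd + 1
  | .dia C => C.bd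

/-- Diamond-depth of a concept. -/
def Cpt.dd : Cpt → ℕ
  | .atom _ => 0
  | .meet C₁ C₂ => max C₁.dd C₂.dd
  | .join C₁ C₂ => max C₁.dd C₂.dd
  | .box C => C.dd
  | .dia C => C.dd + 1

/-- Box-depth of an object name (names in the input ABox have depth 0,
prefixing changes the depth, classifying names inherit depths from their
concept). -/
def ObName.bd : ObName → ℤ
  | .base _ => 0
  | .cls C => -(C.bd : ℤ)
  | .dia b => b.bd
  | .bdia b => b.bd + 1

/-- Diamond-depth of an object name. -/
def ObName.dd : ObName → ℤ
  | .base _ => 0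
  | .cls C => -(C.dd : ℤ)
  | .dia b => b.dd + 1
  | .bdia b => b.dd

/-- Box-depth of a feature name. -/
def FtName.bd : FtName → ℤ
  | .base _ => 0
  | .cls C => -(C.bd : ℤ)
  | .box y => y.bd + 1
  | .bbox y => y.bd

/-- Diamond-depth of a feature name. -/
def FtName.dd : FtName → ℤ
  | .base _ => 0
  | .cls C => -(C.dd : ℤ)
  | .box y => y.dd
  | .bbox y => y.dd + 1

/-- All concepts occurring in an ABox. -/
def aboxCpts (A : Finset Term) : Finset Cpt := A.biUnion Term.cpts

/-- `□_D(A)`: maximal box-depth of a concept occurring in `A`. -/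
def aboxBd (A : Finset Term) : ℕ := (aboxCpts A).sup Cpt.bd

/-- `◇_D(A)`: maximal diamond-depth of a concept occurring in `A`. -/
def aboxDd (A : Finset Term) : ℕ := (aboxCpts A).sup Cpt.dd

/-- One-step derivability: `Deriv E A S t` holds iff the term `t` can be
added by applying one of the LE-ALC tableaux expansion rules (or the extra
rule `E`) to the current set of terms `S`, `A` being the input ABox (used
for the side conditions of the creation and inverse rules). -/
inductive Deriv (E : Term → Term → Prop) (A S : Set Term) : Term → Prop
  /-- creation rule -/
  | create_a {C : Cpt} : Occurs C A → Deriv E A S (.pos (.mem (.cls C) C))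
  | create_x {C : Cpt} : Occurs C A → Deriv E A S (.pos (.fmem (.cls C) C))
  /-- basic rule -/
  | basic {b y C} : Term.pos (.mem b C) ∈ S → Term.pos (.fmem y C) ∈ S →
      Deriv E A S (.pos (.rI b y))
  /-- rules for the logical connectives -/
  | andA_l {b C₁ C₂} : Term.pos (.mem b (.meet C₁ C₂)) ∈ S → Deriv E A S (.pos (.mem b C₁))
  | andA_r {b C₁ C₂} : Term.pos (.mem b (.meet C₁ C₂)) ∈ S → Deriv E A S (.pos (.mem b C₂))
  | orX_l {y C₁ C₂} : Term.pos (.fmem y (.join C₁ C₂)) ∈ S → Deriv E A S (.pos (.fmem y C₁))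
  | orX_r {y C₁ C₂} : Term.pos (.fmem y (.join C₁ C₂)) ∈ S → Deriv E A S (.pos (.fmem y C₂))
  | boxR {b y C} : Term.pos (.mem b (.box C)) ∈ S → Term.pos (.fmem y C) ∈ S →
      Deriv E A S (.pos (.rbox b y))
  | diaR {b y C} : Term.pos (.fmem y (.dia C)) ∈ S → Term.pos (.mem b C) ∈ S →
      Deriv E A S (.pos (.rdia y b))
  /-- inverse rules for the connectives -/
  | andA_inv {b C₁ C₂} : Term.pos (.mem b C₁) ∈ S → Term.pos (.mem b C₂) ∈ S →
      Occurs (.meet C₁ C₂) A → Deriv E A S (.pos (.mem b (.meet C₁ C₂)))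
  | orX_inv {y C₁ C₂} : Term.pos (.fmem y C₁) ∈ S → Term.pos (.fmem y C₂) ∈ S →
      Occurs (.join C₁ C₂) A → Deriv E A S (.pos (.fmem y (.join C₁ C₂)))
  /-- adjunction rules -/
  | adj_box_l {b y} : Term.pos (.rbox b y) ∈ S → Deriv E A S (.pos (.rI (.bdia b) y))
  | adj_box_r {b y} : Term.pos (.rbox b y) ∈ S → Deriv E A S (.pos (.rI b (FtName.boxS y)))
  | adj_dia_l {b y} : Term.pos (.rdia y b) ∈ S → Deriv E A S (.pos (.rI (ObName.diaS b) y))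
  | adj_dia_r {b y} : Term.pos (.rdia y b) ∈ S → Deriv E A S (.pos (.rI b (.bbox y)))
  /-- I-compatibility rules -/
  | icomp_box {b y} : Term.pos (.rI b (FtName.boxS y)) ∈ S → Deriv E A S (.pos (.rbox b y))
  | icomp_bbox {b y} : Term.pos (.rI b (.bbox y)) ∈ S → Deriv E A S (.pos (.rdia y b))
  | icomp_dia {b y} : Term.pos (.rI (ObName.diaS b) y) ∈ S → Deriv E A S (.pos (.rdia y b))
  | icomp_bdia {b y} : Term.pos (.rI (.bdia b) y) ∈ S → Deriv E A S (.pos (.rbox b y))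
  /-- basic rules for negative assertions -/
  | neg_b {b C} : Term.neg (.mem b C) ∈ S → Deriv E A S (.neg (.rI b (.cls C)))
  | neg_x {y C} : Term.neg (.fmem y C) ∈ S → Deriv E A S (.neg (.rI (.cls C) y))
  /-- appending rules -/
  | app_x {b C} : Term.pos (.rI b (.cls C)) ∈ S → Deriv E A S (.pos (.mem b C))
  | app_a {y C} : Term.pos (.rI (.cls C) y) ∈ S → Deriv E A S (.pos (.fmem y C))
  /-- an additional expansion rule `E` -/
  | extra {t t'} : E t t' → t ∈ S → Deriv E A S t'

/-- `S` contains `A` and is closed under the expansion rules. -/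
def RuleClosed (E : Term → Term → Prop) (A S : Set Term) : Prop :=
  A ⊆ S ∧ ∀ t, Deriv E A S t → t ∈ S

/-- The tableaux completion `Ā` of the ABox `A` (w.r.t. the LE-ALC expansion
rules together with the extra rule `E`): the least set of terms containing
`A` and closed under the rules. -/
def Compl (E : Term → Term → Prop) (A : Set Term) : Set Term :=
  {t | ∀ S : Set Term, RuleClosed E A S → t ∈ S}

/-- No extra expansion rule: the plain LE-ALC tableaux algorithm. -/
def noExt : Term → Term → Prop := fun _ _ => False

/-- One expansion step of the tableaux algorithm: a rule is applied to the
current set `B` and adds a new term. -/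
def Step (E : Term → Term → Prop) (A B B' : Set Term) : Prop :=
  ∃ t, Deriv E A B t ∧ t ∉ B ∧ B' = insert t B

/-- A clash: some relational term occurs together with its negation. -/
def HasClash (S : Set Term) : Prop :=
  ∃ β : PTerm, β.IsRelational ∧ Term.pos β ∈ S ∧ Term.neg β ∈ S

/-- The separation rule `SA(b,d)`: from `b I x` infer `d I x`. -/
def ruleSA (b d : ObName) : Term → Term → Prop :=
  fun t t' => ∃ x : FtName, t = Term.pos (.rI b x) ∧ t' = Term.pos (.rI d x)

/-- The separation rule `SX(y,z)`: from `a I y` infer `a I z`. -/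
def ruleSX (y z : FtName) : Term → Term → Prop :=
  fun t t' => ∃ a : ObName, t = Term.pos (.rI a y) ∧ t' = Term.pos (.rI a z)

/-- The rule `SA(R_□,R_◇,b)`: from `b R_□ y` infer `y R_◇ b`. -/
def ruleSAR (b : ObName) : Term → Term → Prop :=
  fun t t' => ∃ x : FtName, t = Term.pos (.rbox b x) ∧ t' = Term.pos (.rdia x b)

/-- The rule `SX(R_◇,R_□,y)`: from `y R_◇ a` infer `a R_□ y`. -/
def ruleSXR (y : FtName) : Term → Term → Prop :=
  fun t t' => ∃ a : ObName, t = Term.pos (.rdia y a) ∧ t' = Term.pos (.rbox a y)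

/-! ## Semantics: enriched formal contexts -/

/-- `I^{(1)}[B]` -/
def gup {O F : Type} (I : O → F → Prop) (B : Set O) : Set F := {x | ∀ a ∈ B, I a x}

/-- `I^{(0)}[Y]` -/
def gdn {O F : Type} (I : O → F → Prop) (Y : Set F) : Set O := {a | ∀ x ∈ Y, I a x}

/-- Galois-stability for sets of objects. -/
def StableO {O F : Type} (I : O → F → Prop) (B : Set O) : Prop := gdn I (gup I B) = B

/-- Galois-stability for sets of features. -/
def StableF {O F : Type} (I : O → F → Prop) (Y : Set F) : Prop := gup I (gdn I Y) = Y

/-- An interpretation of LE-ALC: an enriched formal context `(Ob, Ft, I, R_□, R_◇)`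
together with interpretations of the individual names and of the atomic
concepts (an atomic concept is interpreted by the formal concept whose
extent is `vA n` and whose intent is `gup I (vA n)`). -/
structure Model where
  Ob : Type
  Ft : Type
  I : Ob → Ft → Prop
  Rb : Ob → Ft → Prop
  Rd : Ft → Ob → Prop
  oi : ObName → Ob
  fi : FtName → Ft
  vA : ℕ → Set Ob

/-- Intent of the interpretation of an atomic concept. -/
def Model.vX (M : Model) (n : ℕ) : Set M.Ft := gup M.I (M.vA n)

/-- Well-formedness of an interpretation: `R_□` and `R_◇` are `I`-compatible,
and atomic concepts are interpreted by formal concepts. -/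
def Model.Good (M : Model) : Prop :=
  (∀ x, StableO M.I {a | M.Rb a x}) ∧
  (∀ a, StableF M.I {x | M.Rb a x}) ∧
  (∀ a, StableF M.I {x | M.Rd x a}) ∧
  (∀ x, StableO M.I {a | M.Rd x a}) ∧
  (∀ n, StableO M.I (M.vA n))

/-- The interpretation `C^M = (extent, intent)` of a concept. -/
def Model.ci (M : Model) : Cpt → Set M.Ob × Set M.Ft
  | .atom n => (M.vA n, M.vX n)
  | .meet C₁ C₂ =>
      ((Model.ci M C₁).1 ∩ (Model.ci M C₂).1,
        gup M.I ((Model.ci M C₁).1 ∩ (Model.ci M C₂).1))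
  | .join C₁ C₂ =>
      (gdn M.I ((Model.ci M C₁).2 ∩ (Model.ci M C₂).2),
        (Model.ci M C₁).2 ∩ (Model.ci M C₂).2)
  | .box C =>
      (gdn M.Rb (Model.ci M C).2, gup M.I (gdn M.Rb (Model.ci M C).2))
  | .dia C =>
      (gdn M.I (gup (fun a x => M.Rd x a) (Model.ci M C).1),
        gup (fun a x => M.Rd x a) (Model.ci M C).1)

/-- Satisfaction of positive ABox terms. -/
def Model.SatP (M : Model) : PTerm → Prop
  | .rI b y => M.I (M.oi b) (M.fi y)
  | .rbox b y => M.Rb (M.oi b) (M.fi y)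
  | .rdia y b => M.Rd (M.fi y) (M.oi b)
  | .mem b C => M.oi b ∈ (Model.ci M C).1
  | .fmem y C => M.fi y ∈ (Model.ci M C).2

/-- Satisfaction of ABox terms. -/
def Model.Sat (M : Model) : Term → Prop
  | .pos t => M.SatP t
  | .neg t => ¬ M.SatP t

/-- `M` is a model of the set of terms `A`. -/
def Model.SatAll (M : Model) (A : Set Term) : Prop := ∀ t ∈ A, M.Sat t

/-- An ABox is consistent iff it has a model. -/
def Consistent (A : Set Term) : Prop := ∃ M : Model, M.Good ∧ M.SatAll A

/-- `A ⊨ t`: every model of `A` satisfies `t`. -/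
def Entails (A : Set Term) (t : Term) : Prop :=
  ∀ M : Model, M.Good → M.SatAll A → M.Sat t

/-- `A ⊨ C₁ ⊑ C₂`: in every model of `A`, `C₁^M ≤ C₂^M` in the concept lattice. -/
def EntailsSub (A : Set Term) (C₁ C₂ : Cpt) : Prop :=
  ∀ M : Model, M.Good → M.SatAll A → (Model.ci M C₁).1 ⊆ (Model.ci M C₂).1

/-! ### Semantic concept operations -/

/-- The operation `[R_□]` on (extent, intent) pairs. -/
def Model.cbox (M : Model) (c : Set M.Ob × Set M.Ft) : Set M.Ob × Set M.Ft :=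
  (gdn M.Rb c.2, gup M.I (gdn M.Rb c.2))

/-- The operation `⟨R_◇⟩` on (extent, intent) pairs. -/
def Model.cdia (M : Model) (c : Set M.Ob × Set M.Ft) : Set M.Ob × Set M.Ft :=
  (gdn M.I (gup (fun a x => M.Rd x a) c.1), gup (fun a x => M.Rd x a) c.1)

/-- The operation `◆` (left adjoint of `[R_□]`). -/
def Model.cbdia (M : Model) (c : Set M.Ob × Set M.Ft) : Set M.Ob × Set M.Ft :=
  (gdn M.I (gup M.Rb c.1), gup M.Rb c.1)

/-- The operation `■` (right adjoint of `⟨R_◇⟩`). -/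
def Model.cbbox (M : Model) (c : Set M.Ob × Set M.Ft) : Set M.Ob × Set M.Ft :=
  (gdn (fun a x => M.Rd x a) c.2, gup M.I (gdn (fun a x => M.Rd x a) c.2))

/-- The concept `𝐚 = (a^{↑↓}, a^{↑})` generated by an object. -/
def Model.genO (M : Model) (a : M.Ob) : Set M.Ob × Set M.Ft :=
  (gdn M.I (gup M.I {a}), gup M.I {a})

/-- The concept `𝐱 = (x^{↓}, x^{↓↑})` generated by a feature. -/
def Model.genF (M : Model) (x : M.Ft) : Set M.Ob × Set M.Ft :=
  (gdn M.I {x}, gup M.I (gdn M.I {x}))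

/-- The concept companion `con(b)` of an object name, interpreted in `M`. -/
def Model.conO (M : Model) : ObName → Set M.Ob × Set M.Ft
  | .base n => M.genO (M.oi (.base n))
  | .cls C => M.genO (M.oi (.cls C))
  | .dia b => M.cdia (Model.conO M b)
  | .bdia b => M.cbdia (Model.conO M b)

/-- The concept companion `con(y)` of a feature name, interpreted in `M`. -/
def Model.conF (M : Model) : FtName → Set M.Ob × Set M.Ft
  | .base n => M.genF (M.fi (.base n))
  | .cls C => M.genF (M.fi (.cls C))
  | .box y => M.cbox (Model.conF M y)
  | .bbox y => M.cbbox (Model.conF M y)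

/-! ### The canonical model built from the tableaux completion -/

/-- Classical `dite`. -/
noncomputable def cdite {α : Sort*} (p : Prop) (f : p → α) (g : ¬ p → α) : α :=
  @dite α p (Classical.dec p) f g

/-- The canonical model built from the tableaux completion `Ā` of `A`:
its objects (resp. features) are the object (resp. feature) names occurring
in `Ā` (plus a dummy point interpreting the names not occurring in `Ā`),
every name occurring in `Ā` is interpreted by itself, the relations are read
off from `Ā`, and an atomic concept `D` is interpreted by the formal concept
`(x_D^↓, a_D^↑)`. -/
noncomputable def canModel (A : Finset Term) : Model where
  Ob := Option {b : ObName // ObOccurs b (Compl noExt ↑A)}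
  Ft := Option {y : FtName // FtOccurs y (Compl noExt ↑A)}
  I := fun o x => ∃ b y, o = some b ∧ x = some y ∧
        Term.pos (.rI b.1 y.1) ∈ Compl noExt ↑A
  Rb := fun o x => ∃ b y, o = some b ∧ x = some y ∧
        Term.pos (.rbox b.1 y.1) ∈ Compl noExt ↑A
  Rd := fun x o => ∃ b y, o = some b ∧ x = some y ∧
        Term.pos (.rdia y.1 b.1) ∈ Compl noExt ↑A
  oi := fun b => cdite (ObOccurs b (Compl noExt ↑A)) (fun h => some ⟨b, h⟩) (fun _ => none)
  fi := fun y => cdite (FtOccurs y (Compl noExt ↑A)) (fun h => some ⟨y, h⟩) (fun _ => none)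
  vA := fun n => {o | ∃ b, o = some b ∧
        Term.pos (.rI b.1 (.cls (.atom n))) ∈ Compl noExt ↑A}

/-! ### ◇-leading and □-leading concepts -/

/-- ◇-leading concepts. -/
inductive DiaLeading : Cpt → Prop
  | atom (n : ℕ) : DiaLeading (.dia (.atom n))
  | dia {C : Cpt} : DiaLeading C → DiaLeading (.dia C)
  | join {C : Cpt} (C₁ : Cpt) : DiaLeading C → DiaLeading (.join C C₁)
  | meet {C₁ C₂ : Cpt} : DiaLeading C₁ → DiaLeading C₂ → DiaLeading (.meet C₁ C₂)

/-- □-leading concepts. -/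
inductive BoxLeading : Cpt → Prop
  | atom (n : ℕ) : BoxLeading (.box (.atom n))
  | box {C : Cpt} : BoxLeading C → BoxLeading (.box C)
  | meet {C : Cpt} (C₁ : Cpt) : BoxLeading C → BoxLeading (.meet C C₁)
  | join {C₁ C₂ : Cpt} : BoxLeading C₁ → BoxLeading C₂ → BoxLeading (.join C₁ C₂)

/-!
Soundness. A model of `A` in which the axiom holds extends to the names generated by the
tableaux: `a_C` and `x_C` denote `C`, and the prefixes `◇`, `◆`, `□`, `■` act as the
corresponding operations on formal concepts. Every relational term of the completion then holds
as an inequality between formal concepts; the adjunction and `I`-compatibility rules are the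
adjunctions `◆ ⊣ [R_□]` and `⟨R_◇⟩ ⊣ ■`, and the separation rule is the axiom. A clash would
contradict a negative term of `A`.

Completeness. The completion, with every name interpreting itself, is an enriched formal
context in which each concept `C` of `A` has extent `{b | b : C}` and intent `{y | y :: C}`; if
it is clash-free it is a model of `A`, and closure under the separation rule is the axiom.

Termination. Integer potentials on names bound the modal prefixes that the rules can stack in
front of them, so every term of the completion lies in a fixed set of size `O((|A| + 2)⁸)`, and
every expansion step adds a new term of that set.
-/

section Polar
variable {O F : Type} (I : O → F → Prop)

theorem gup_anti {X Y : Set O} (h : X ⊆ Y) : gup I Y ⊆ gup I X := upperPolar_anti I h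

theorem gdn_anti {X Y : Set F} (h : X ⊆ Y) : gdn I Y ⊆ gdn I X := lowerPolar_anti I h

theorem subset_gdn_gup (X : Set O) : X ⊆ gdn I (gup I X) := subset_lowerPolar_upperPolar I X

theorem subset_gup_gdn (Y : Set F) : Y ⊆ gup I (gdn I Y) := subset_upperPolar_lowerPolar I Y

theorem stableO_gdn_self (Y : Set F) : StableO I (gdn I Y) :=
  lowerPolar_upperPolar_lowerPolar I Y

theorem stableF_gup_self (X : Set O) : StableF I (gup I X) :=
  upperPolar_lowerPolar_upperPolar I X

theorem stableO_column (x : F) : StableO I {a | I a x} := by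
  simpa [gdn] using stableO_gdn_self I {x}

theorem stableF_row (a : O) : StableF I {x | I a x} := by
  simpa [gup] using stableF_gup_self I {a}

theorem gdn_subset_of_subset {X : Set O} {Y Z : Set F} (hX : X = gdn I Y) (h : Y ⊆ Z) :
    gdn I Z ⊆ X :=
  hX ▸ gdn_anti I h

theorem gdn_subset_iff {X : Set O} {Y Z : Set F} (hX : X = gdn I Y) (hZ : StableF I Z) :
    gdn I Z ⊆ X ↔ Y ⊆ Z := by
  refine ⟨fun h => ?_, gdn_subset_of_subset I hX⟩
  calc Y ⊆ gup I (gdn I Y) := subset_gup_gdn I Y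
    _ = gup I X := by rw [hX]
    _ ⊆ gup I (gdn I Z) := gup_anti I h
    _ = Z := hZ

theorem stableO_gdn_of_columns {G : Type} (R : O → G → Prop) (h : ∀ x, StableO I {a | R a x})
    (Z : Set G) : StableO I (gdn R Z) := by
  refine (subset_gdn_gup I _).antisymm' fun a ha x hx => ?_
  show a ∈ {a | R a x}
  rw [← h x]
  exact fun y hy => ha y (gup_anti I (fun a' (ha' : a' ∈ gdn R Z) => ha' x hx) hy)

theorem stableF_gup_of_rows {G : Type} (R : G → F → Prop) (h : ∀ a, StableF I {x | R a x})
    (Z : Set G) : StableF I (gup R Z) := by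
  refine (subset_gup_gdn I _).antisymm' fun x hx a ha => ?_
  show x ∈ {x | R a x}
  rw [← h a]
  exact fun b hb => hx b (gdn_anti I (fun x' (hx' : x' ∈ gup R Z) => hx' a ha) hb)

end Polar

section Completion
variable {E : Term → Term → Prop} {A : Set Term}

theorem Deriv.imp {E' : Term → Term → Prop} {S S' : Set Term} {t : Term} (hS : S ⊆ S')
    (hE : ∀ {u}, E u t → u ∈ S → Deriv E' A S' t) (hd : Deriv E A S t) :
    Deriv E' A S' t := by
  cases hd with
  | create_a h₁ => exact .create_a h₁
  | create_x h₁ => exact .create_x h₁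
  | basic h₁ h₂ => exact .basic (hS h₁) (hS h₂)
  | andA_l h₁ => exact .andA_l (hS h₁)
  | andA_r h₁ => exact .andA_r (hS h₁)
  | orX_l h₁ => exact .orX_l (hS h₁)
  | orX_r h₁ => exact .orX_r (hS h₁)
  | boxR h₁ h₂ => exact .boxR (hS h₁) (hS h₂)
  | diaR h₁ h₂ => exact .diaR (hS h₁) (hS h₂)
  | andA_inv h₁ h₂ h₃ => exact .andA_inv (hS h₁) (hS h₂) h₃
  | orX_inv h₁ h₂ h₃ => exact .orX_inv (hS h₁) (hS h₂) h₃
  | adj_box_l h₁ => exact .adj_box_l (hS h₁)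
  | adj_box_r h₁ => exact .adj_box_r (hS h₁)
  | adj_dia_l h₁ => exact .adj_dia_l (hS h₁)
  | adj_dia_r h₁ => exact .adj_dia_r (hS h₁)
  | icomp_box h₁ => exact .icomp_box (hS h₁)
  | icomp_bbox h₁ => exact .icomp_bbox (hS h₁)
  | icomp_dia h₁ => exact .icomp_dia (hS h₁)
  | icomp_bdia h₁ => exact .icomp_bdia (hS h₁)
  | neg_b h₁ => exact .neg_b (hS h₁)
  | neg_x h₁ => exact .neg_x (hS h₁)
  | app_x h₁ => exact .app_x (hS h₁)
  | app_a h₁ => exact .app_a (hS h₁)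
  | extra he h₁ => exact hE he h₁

theorem Deriv.mono {S S' : Set Term} (h : S ⊆ S') {t : Term} (hd : Deriv E A S t) :
    Deriv E A S' t :=
  hd.imp h fun he hu => .extra he (h hu)

theorem Deriv.extra_or_noExt {S : Set Term} {t : Term} (hd : Deriv E A S t) :
    (∃ u ∈ S, E u t) ∨ Deriv noExt A S t := by
  by_cases h : ∃ u ∈ S, E u t
  · exact .inl h
  · exact .inr (hd.imp subset_rfl fun he hu => absurd ⟨_, hu, he⟩ h)

theorem subset_compl : A ⊆ Compl E A := fun _ ht _ hS => hS.1 ht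

theorem compl_subset_of_ruleClosed {S : Set Term} (h : RuleClosed E A S) : Compl E A ⊆ S :=
  fun _ ht => ht S h

theorem mem_compl_of_deriv {t : Term} (h : Deriv E A (Compl E A) t) : t ∈ Compl E A :=
  fun _ hS => hS.2 t (h.mono (compl_subset_of_ruleClosed hS))

end Completion

theorem Cpt.mem_subs_self (C : Cpt) : C ∈ C.subs := by
  cases C <;> simp [Cpt.subs]

theorem Cpt.subs_trans {C D E : Cpt} (hD : D ∈ C.subs) (hE : E ∈ D.subs) : E ∈ C.subs := by
  induction C generalizing D with
  | atom n => simp_all [Cpt.subs]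
  | meet C₁ C₂ ih₁ ih₂ | join C₁ C₂ ih₁ ih₂ =>
    simp only [Cpt.subs, Finset.mem_insert, Finset.mem_union] at hD ⊢
    rcases hD with rfl | h | h
    · simpa [Cpt.subs] using hE
    · exact .inr (.inl (ih₁ h hE))
    · exact .inr (.inr (ih₂ h hE))
  | box C ih | dia C ih =>
    simp only [Cpt.subs, Finset.mem_insert] at hD ⊢
    rcases hD with rfl | h
    · simpa [Cpt.subs] using hE
    · exact .inr (ih h hE)

namespace Occurs
variable {A : Set Term} {C D C₁ C₂ : Cpt}

theorem of_mem_subs (h : Occurs C A) (hD : D ∈ C.subs) : Occurs D A := by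
  obtain ⟨t, ht, hC⟩ := h
  refine ⟨t, ht, ?_⟩
  rcases t with (_ | _ | _ | _ | _) | (_ | _ | _ | _ | _) <;>
    simp only [Term.cpts, Finset.notMem_empty] at hC ⊢ <;> exact Cpt.subs_trans hC hD

theorem meet_left (h : Occurs (.meet C₁ C₂) A) : Occurs C₁ A :=
  h.of_mem_subs (by simp [Cpt.subs, Cpt.mem_subs_self])

theorem meet_right (h : Occurs (.meet C₁ C₂) A) : Occurs C₂ A :=
  h.of_mem_subs (by simp [Cpt.subs, Cpt.mem_subs_self])

theorem join_left (h : Occurs (.join C₁ C₂) A) : Occurs C₁ A :=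
  h.of_mem_subs (by simp [Cpt.subs, Cpt.mem_subs_self])

theorem join_right (h : Occurs (.join C₁ C₂) A) : Occurs C₂ A :=
  h.of_mem_subs (by simp [Cpt.subs, Cpt.mem_subs_self])

theorem of_box (h : Occurs (.box C) A) : Occurs C A :=
  h.of_mem_subs (by simp [Cpt.subs, Cpt.mem_subs_self])

theorem of_dia (h : Occurs (.dia C) A) : Occurs C A :=
  h.of_mem_subs (by simp [Cpt.subs, Cpt.mem_subs_self])

end Occurs

theorem ObOccurs.isBase {A : Set Term} (hWF : ABoxWF A) {b : ObName} (h : ObOccurs b A) :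
    b.IsBase :=
  let ⟨t, ht, hb⟩ := h; (hWF t ht).1 b hb

theorem FtOccurs.isBase {A : Set Term} (hWF : ABoxWF A) {y : FtName} (h : FtOccurs y A) :
    y.IsBase :=
  let ⟨t, ht, hy⟩ := h; (hWF t ht).2 y hy

/-- The negative terms of a completion are those of `A` and those produced from them by the
basic rules for negative assertions. -/
def NegOrigin (A : Set Term) (β : PTerm) : Prop :=
  Term.neg β ∈ A ∨ (∃ b C, β = .rI b (.cls C) ∧ Term.neg (.mem b C) ∈ A) ∨
    (∃ y C, β = .rI (.cls C) y ∧ Term.neg (.fmem y C) ∈ A)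

def WithNegOrigin (A : Set Term) (P : PTerm → Prop) : Term → Prop
  | .pos β => P β
  | .neg β => NegOrigin A β

def RulePreserves (E : Term → Term → Prop) (A : Set Term) (P : PTerm → Prop) : Prop :=
  ∀ t t', E t t' → WithNegOrigin A P t → WithNegOrigin A P t'

theorem withNegOrigin_of_mem_compl {E : Term → Term → Prop} {A : Set Term} {P : PTerm → Prop}
    (hA : ∀ β, Term.pos β ∈ A → P β)
    (hE : RulePreserves E A P)
    (hpos : ∀ {S β}, (∀ t ∈ S, WithNegOrigin A P t) → Deriv noExt A S (.pos β) → P β)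
    {t : Term} (ht : t ∈ Compl E A) : WithNegOrigin A P t := by
  refine compl_subset_of_ruleClosed (S := {t | WithNegOrigin A P t}) ⟨?_, ?_⟩ ht
  · rintro (β | β) hβ
    exacts [hA β hβ, .inl hβ]
  · intro t hd
    rcases hd.extra_or_noExt with ⟨u, hu, he⟩ | hd
    · exact hE u t he hu
    rcases t with β | β
    · exact hpos (fun t ht => ht) hd
    · cases hd with
      | neg_b h =>
        obtain h | ⟨_, _, ⟨⟩, -⟩ | ⟨_, _, ⟨⟩, -⟩ := (h : NegOrigin A _)
        exact .inr (.inl ⟨_, _, rfl, h⟩)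
      | neg_x h =>
        obtain h | ⟨_, _, ⟨⟩, -⟩ | ⟨_, _, ⟨⟩, -⟩ := (h : NegOrigin A _)
        exact .inr (.inr ⟨_, _, rfl, h⟩)
      | extra h => exact h.elim

/-! ### Soundness -/

namespace Model
variable {M : Model}

def IsConcept (M : Model) (c : Set M.Ob × Set M.Ft) : Prop :=
  c.2 = gup M.I c.1 ∧ c.1 = gdn M.I c.2

theorem IsConcept.stableO {c : Set M.Ob × Set M.Ft} (hc : M.IsConcept c) : StableO M.I c.1 := by
  rw [StableO, ← hc.1, ← hc.2]

theorem IsConcept.intent_subset {c d : Set M.Ob × Set M.Ft} (hc : M.IsConcept c)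
    (hd : M.IsConcept d) (h : c.1 ⊆ d.1) : d.2 ⊆ c.2 := by
  rw [hc.1, hd.1]
  exact gup_anti M.I h

theorem isConcept_genO (a : M.Ob) : M.IsConcept (M.genO a) :=
  ⟨(stableF_gup_self M.I {a}).symm, rfl⟩

theorem isConcept_genF (x : M.Ft) : M.IsConcept (M.genF x) :=
  ⟨rfl, (stableO_gdn_self M.I {x}).symm⟩

theorem isConcept_cbox (hM : M.Good) (c : Set M.Ob × Set M.Ft) : M.IsConcept (M.cbox c) :=
  ⟨rfl, (stableO_gdn_of_columns M.I M.Rb hM.1 c.2).symm⟩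

theorem isConcept_cdia (hM : M.Good) (c : Set M.Ob × Set M.Ft) : M.IsConcept (M.cdia c) :=
  ⟨(stableF_gup_of_rows M.I _ hM.2.2.1 c.1).symm, rfl⟩

theorem isConcept_cbdia (hM : M.Good) (c : Set M.Ob × Set M.Ft) : M.IsConcept (M.cbdia c) :=
  ⟨(stableF_gup_of_rows M.I M.Rb hM.2.1 c.1).symm, rfl⟩

theorem isConcept_cbbox (hM : M.Good) (c : Set M.Ob × Set M.Ft) : M.IsConcept (M.cbbox c) :=
  ⟨rfl, (stableO_gdn_of_columns M.I _ hM.2.2.2.1 c.2).symm⟩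

theorem isConcept_ci (hM : M.Good) (C : Cpt) : M.IsConcept (M.ci C) := by
  induction C with
  | atom n => exact ⟨rfl, (hM.2.2.2.2 n).symm⟩
  | meet C₁ C₂ ih₁ ih₂ =>
    refine ⟨rfl, ?_⟩
    have h : (M.ci C₁).1 ∩ (M.ci C₂).1 = gdn M.I ((M.ci C₁).2 ∪ (M.ci C₂).2) := by
      rw [ih₁.2, ih₂.2]; exact (lowerPolar_union M.I _ _).symm
    show (M.ci C₁).1 ∩ (M.ci C₂).1 = gdn M.I (gup M.I ((M.ci C₁).1 ∩ (M.ci C₂).1))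
    rw [h]
    exact (stableO_gdn_self M.I _).symm
  | join C₁ C₂ ih₁ ih₂ =>
    refine ⟨?_, rfl⟩
    have h : (M.ci C₁).2 ∩ (M.ci C₂).2 = gup M.I ((M.ci C₁).1 ∪ (M.ci C₂).1) := by
      rw [ih₁.1, ih₂.1]; exact (upperPolar_union M.I _ _).symm
    show (M.ci C₁).2 ∩ (M.ci C₂).2 = gup M.I (gdn M.I ((M.ci C₁).2 ∩ (M.ci C₂).2))
    rw [h]
    exact (stableF_gup_self M.I _).symm
  | box C => exact isConcept_cbox hM (M.ci C)
  | dia C => exact isConcept_cdia hM (M.ci C)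

theorem genO_subset_iff {a : M.Ob} {X : Set M.Ob} (hX : StableO M.I X) :
    (M.genO a).1 ⊆ X ↔ a ∈ X := by
  refine ⟨fun h => h (subset_gdn_gup M.I {a} rfl), fun ha => ?_⟩
  rw [← hX]
  exact gdn_anti M.I (gup_anti M.I (Set.singleton_subset_iff.2 ha))

theorem genF_subset_iff {x : M.Ft} {Y : Set M.Ft} (hY : StableF M.I Y) :
    (M.genF x).2 ⊆ Y ↔ x ∈ Y := by
  refine ⟨fun h => h (subset_gup_gdn M.I {x} rfl), fun hx => ?_⟩
  rw [← hY]
  exact gup_anti M.I (gdn_anti M.I (Set.singleton_subset_iff.2 hx))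

def denO (M : Model) : ObName → Set M.Ob × Set M.Ft
  | .base n => M.genO (M.oi (.base n))
  | .cls C => M.ci C
  | .dia b => M.cdia (M.denO b)
  | .bdia b => M.cbdia (M.denO b)

def denF (M : Model) : FtName → Set M.Ob × Set M.Ft
  | .base n => M.genF (M.fi (.base n))
  | .cls C => M.ci C
  | .box y => M.cbox (M.denF y)
  | .bbox y => M.cbbox (M.denF y)

theorem isConcept_denF (hM : M.Good) (y : FtName) : M.IsConcept (M.denF y) := by
  cases y with
  | base n => exact isConcept_genF _
  | cls C => exact isConcept_ci hM C
  | box y => exact isConcept_cbox hM _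
  | bbox y => exact isConcept_cbbox hM _

theorem denO_diaS (M : Model) (b : ObName) : M.denO b.diaS = M.cdia (M.denO b) := by
  cases b <;> rfl

theorem denF_boxS (M : Model) (y : FtName) : M.denF y.boxS = M.cbox (M.denF y) := by
  cases y <;> rfl

theorem denO_of_isBase {b : ObName} (hb : b.IsBase) : M.denO b = M.genO (M.oi b) := by
  obtain ⟨n, rfl⟩ := hb; rfl

theorem denF_of_isBase {y : FtName} (hy : y.IsBase) : M.denF y = M.genF (M.fi y) := by
  obtain ⟨n, rfl⟩ := hy; rfl

/-- `b I y` says `den b ≤ den y`, `b R_□ y` says `den b ≤ [R_□] den y`, and `y R_◇ b` says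
`⟨R_◇⟩ den b ≤ den y`. -/
def Holds (M : Model) : PTerm → Prop
  | .rI b y => (M.denO b).1 ⊆ (M.denF y).1
  | .rbox b y => ∀ a ∈ (M.denO b).1, ∀ x ∈ (M.denF y).2, M.Rb a x
  | .rdia y b => ∀ x ∈ (M.denF y).2, ∀ a ∈ (M.denO b).1, M.Rd x a
  | .mem b C => (M.denO b).1 ⊆ (M.ci C).1
  | .fmem y C => (M.ci C).1 ⊆ (M.denF y).1

theorem holds_rbox_iff_boxS {b : ObName} {y : FtName} :
    M.Holds (.rbox b y) ↔ M.Holds (.rI b y.boxS) := by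
  rw [Holds, Holds, denF_boxS]; rfl

theorem holds_rbox_iff_bdia (hM : M.Good) {b : ObName} {y : FtName} :
    M.Holds (.rbox b y) ↔ M.Holds (.rI b.bdia y) := by
  rw [Holds, Holds, denO, cbdia,
    gdn_subset_iff M.I (isConcept_denF hM y).2 (stableF_gup_of_rows M.I M.Rb hM.2.1 _)]
  exact ⟨fun h x hx a ha => h a ha x hx, fun h a ha x hx => h hx a ha⟩

theorem holds_rdia_iff_diaS (hM : M.Good) {b : ObName} {y : FtName} :
    M.Holds (.rdia y b) ↔ M.Holds (.rI b.diaS y) := by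
  rw [Holds, Holds, denO_diaS, cdia,
    gdn_subset_iff M.I (isConcept_denF hM y).2 (stableF_gup_of_rows M.I _ hM.2.2.1 _)]
  rfl

theorem holds_rdia_iff_bbox {b : ObName} {y : FtName} :
    M.Holds (.rdia y b) ↔ M.Holds (.rI b y.bbox) :=
  ⟨fun h a ha x hx => h x hx a ha, fun h x hx _ ha => h ha x hx⟩

theorem IsConcept.rel_of_mem {c : Set M.Ob × Set M.Ft} (hc : M.IsConcept c) {a : M.Ob}
    {x : M.Ft} (ha : a ∈ c.1) (hx : x ∈ c.2) : M.I a x := by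
  rw [hc.1] at hx
  exact hx a ha

theorem mem_genO_self (a : M.Ob) : a ∈ (M.genO a).1 := subset_gdn_gup M.I {a} rfl

theorem mem_genF_self (x : M.Ft) : x ∈ (M.genF x).2 := subset_gup_gdn M.I {x} rfl

theorem holds_iff_satP (hM : M.Good) {β : PTerm} (hob : ∀ b ∈ β.objs, b.IsBase)
    (hft : ∀ y ∈ β.feats, y.IsBase) : M.Holds β ↔ M.SatP β := by
  cases β with
  | rI b y =>
    rw [Holds, denO_of_isBase (hob b (by simp [PTerm.objs])),
      denF_of_isBase (hft y (by simp [PTerm.feats])), genO_subset_iff (isConcept_genF _).stableO]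
    exact mem_lowerPolar_singleton M.I
  | rbox b y =>
    rw [Holds, denO_of_isBase (hob b (by simp [PTerm.objs])),
      denF_of_isBase (hft y (by simp [PTerm.feats]))]
    refine ⟨fun h => h _ (mem_genO_self _) _ (mem_genF_self _), fun h a ha x hx => ?_⟩
    have hcol := (genO_subset_iff (hM.1 _)).2 h ha
    exact (genF_subset_iff (hM.2.1 a)).2 hcol hx
  | rdia y b =>
    rw [Holds, denO_of_isBase (hob b (by simp [PTerm.objs])),
      denF_of_isBase (hft y (by simp [PTerm.feats]))]
    refine ⟨fun h => h _ (mem_genF_self _) _ (mem_genO_self _), fun h x hx a ha => ?_⟩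
    have hrow := (genF_subset_iff (hM.2.2.1 _)).2 h hx
    exact (genO_subset_iff (hM.2.2.2.1 x)).2 hrow ha
  | mem b C =>
    rw [Holds, denO_of_isBase (hob b (by simp [PTerm.objs])),
      genO_subset_iff (isConcept_ci hM C).stableO]
    rfl
  | fmem y C =>
    rw [Holds, denF_of_isBase (hft y (by simp [PTerm.feats]))]
    refine ⟨fun h => ?_, fun h a ha x hx => ?_⟩
    · show M.fi y ∈ (M.ci C).2
      rw [(isConcept_ci hM C).1]
      exact fun a ha => h ha _ rfl
    · rw [Set.mem_singleton_iff.1 hx]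
      exact (isConcept_ci hM C).rel_of_mem ha h

theorem holds_iff_satP_of_mem (hM : M.Good) {A : Set Term} (hWF : ABoxWF A) {β : PTerm}
    (h : Term.pos β ∈ A ∨ Term.neg β ∈ A) : M.Holds β ↔ M.SatP β := by
  rcases h with h | h <;> exact holds_iff_satP hM (hWF _ h).1 (hWF _ h).2

theorem holds_of_deriv (hM : M.Good) {A S : Set Term} {β : PTerm}
    (hS : ∀ t ∈ S, WithNegOrigin A M.Holds t) (hd : Deriv noExt A S (.pos β)) : M.Holds β := by
  have H : ∀ {β}, Term.pos β ∈ S → M.Holds β := fun h => hS _ h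
  have hci := isConcept_ci hM
  have hden := isConcept_denF hM
  cases hd with
  | create_a _ | create_x _ => exact subset_rfl
  | basic h₁ h₂ => exact (H h₁).trans (H h₂)
  | andA_l h₁ => exact fun a ha => (H h₁ ha).1
  | andA_r h₁ => exact fun a ha => (H h₁ ha).2
  | orX_l h₁ => exact fun a ha => H h₁ fun x hx => (hci _).rel_of_mem ha hx.1
  | orX_r h₁ => exact fun a ha => H h₁ fun x hx => (hci _).rel_of_mem ha hx.2
  | boxR h₁ h₂ => exact fun a ha x hx => H h₁ ha x ((hci _).intent_subset (hden _) (H h₂) hx)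
  | diaR h₁ h₂ => exact fun x hx a ha => (hci _).intent_subset (hden _) (H h₁) hx a (H h₂ ha)
  | andA_inv h₁ h₂ _ => exact fun a ha => ⟨H h₁ ha, H h₂ ha⟩
  | orX_inv h₁ h₂ _ =>
    exact gdn_subset_of_subset M.I (hden _).2 fun x hx =>
      ⟨(hci _).intent_subset (hden _) (H h₁) hx, (hci _).intent_subset (hden _) (H h₂) hx⟩
  | adj_box_l h₁ => exact (holds_rbox_iff_bdia hM).1 (H h₁)
  | adj_box_r h₁ => exact holds_rbox_iff_boxS.1 (H h₁)
  | adj_dia_l h₁ => exact (holds_rdia_iff_diaS hM).1 (H h₁)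
  | adj_dia_r h₁ => exact holds_rdia_iff_bbox.1 (H h₁)
  | icomp_box h₁ => exact holds_rbox_iff_boxS.2 (H h₁)
  | icomp_bbox h₁ => exact holds_rdia_iff_bbox.2 (H h₁)
  | icomp_dia h₁ => exact (holds_rdia_iff_diaS hM).2 (H h₁)
  | icomp_bdia h₁ => exact (holds_rbox_iff_bdia hM).2 (H h₁)
  | app_x h₁ | app_a h₁ => exact (H h₁ :)
  | extra h => exact h.elim

theorem not_hasClash_compl (hM : M.Good) {E : Term → Term → Prop} {A : Set Term}
    (hWF : ABoxWF A) (hA : M.SatAll A)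
    (hE : RulePreserves E A M.Holds) : ¬ HasClash (Compl E A) := by
  rintro ⟨β, -, hpos, hneg⟩
  have hinv : ∀ t ∈ Compl E A, WithNegOrigin A M.Holds t := fun t ht =>
    withNegOrigin_of_mem_compl
      (fun β hβ => (holds_iff_satP_of_mem hM hWF (.inl hβ)).2 (hA _ hβ)) hE
      (holds_of_deriv hM) ht
  have hβ : M.Holds β := hinv _ hpos
  rcases (hinv _ hneg : NegOrigin A β) with h | ⟨b, C, rfl, h⟩ | ⟨y, C, rfl, h⟩ <;>
    exact hA _ h ((holds_iff_satP_of_mem hM hWF (.inr h)).1 hβ)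

end Model

/-! ### Completeness -/

def canonicalModel (E : Term → Term → Prop) (A : Set Term) : Model where
  Ob := ObName
  Ft := FtName
  I b y := Term.pos (.rI b y) ∈ Compl E A
  Rb b y := Term.pos (.rbox b y) ∈ Compl E A
  Rd y b := Term.pos (.rdia y b) ∈ Compl E A
  oi := id
  fi := id
  vA n := {b | Term.pos (.rI b (.cls (.atom n))) ∈ Compl E A}

namespace canonicalModel
variable {E : Term → Term → Prop} {A : Set Term}

/-- Every `R_□`- or `R_◇`-row and column of the canonical model is an `I`-row or `I`-column,
by the adjunction and `I`-compatibility rules. -/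
theorem good : (canonicalModel E A).Good := by
  refine ⟨fun y => ?_, fun b => ?_, fun b => ?_, fun y => ?_, fun n => stableO_column _ _⟩
  · have : {b | (canonicalModel E A).Rb b y} = {b | (canonicalModel E A).I b y.boxS} :=
      Set.ext fun b => ⟨fun h => mem_compl_of_deriv (.adj_box_r h),
        fun h => mem_compl_of_deriv (.icomp_box h)⟩
    exact this ▸ stableO_column _ _
  · have : {y | (canonicalModel E A).Rb b y} = {y | (canonicalModel E A).I b.bdia y} :=
      Set.ext fun y => ⟨fun h => mem_compl_of_deriv (.adj_box_l h),
        fun h => mem_compl_of_deriv (.icomp_bdia h)⟩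
    exact this ▸ stableF_row _ _
  · have : {y | (canonicalModel E A).Rd y b} = {y | (canonicalModel E A).I b.diaS y} :=
      Set.ext fun y => ⟨fun h => mem_compl_of_deriv (.adj_dia_l h),
        fun h => mem_compl_of_deriv (.icomp_dia h)⟩
    exact this ▸ stableF_row _ _
  · have : {b | (canonicalModel E A).Rd y b} = {b | (canonicalModel E A).I b y.bbox} :=
      Set.ext fun b => ⟨fun h => mem_compl_of_deriv (.adj_dia_r h),
        fun h => mem_compl_of_deriv (.icomp_bbox h)⟩
    exact this ▸ stableO_column _ _

theorem rI_cls_iff_mem {C : Cpt} (hC : Occurs C A) {b : ObName} :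
    Term.pos (.rI b (.cls C)) ∈ Compl E A ↔ Term.pos (.mem b C) ∈ Compl E A :=
  ⟨fun h => mem_compl_of_deriv (.app_x h),
    fun h => mem_compl_of_deriv (.basic h (mem_compl_of_deriv (.create_x hC)))⟩

theorem cls_rI_iff_fmem {C : Cpt} (hC : Occurs C A) {y : FtName} :
    Term.pos (.rI (.cls C) y) ∈ Compl E A ↔ Term.pos (.fmem y C) ∈ Compl E A :=
  ⟨fun h => mem_compl_of_deriv (.app_a h),
    fun h => mem_compl_of_deriv (.basic (mem_compl_of_deriv (.create_a hC)) h)⟩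

variable (E A) in
def memSet (C : Cpt) : Set ObName := {b | Term.pos (.mem b C) ∈ Compl E A}

variable (E A) in
def fmemSet (C : Cpt) : Set FtName := {y | Term.pos (.fmem y C) ∈ Compl E A}

theorem gup_memSet {C : Cpt} (hC : Occurs C A) :
    gup (canonicalModel E A).I (memSet E A C) = fmemSet E A C :=
  Set.ext fun _ => ⟨fun h => mem_compl_of_deriv (.app_a (h _ (mem_compl_of_deriv (.create_a hC)))),
    fun h _ hb => mem_compl_of_deriv (.basic hb h)⟩

theorem gdn_fmemSet {C : Cpt} (hC : Occurs C A) :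
    gdn (canonicalModel E A).I (fmemSet E A C) = memSet E A C :=
  Set.ext fun _ => ⟨fun h => mem_compl_of_deriv (.app_x (h _ (mem_compl_of_deriv (.create_x hC)))),
    fun h _ hy => mem_compl_of_deriv (.basic h hy)⟩

theorem memSet_meet {C₁ C₂ : Cpt} (hC : Occurs (.meet C₁ C₂) A) :
    memSet E A C₁ ∩ memSet E A C₂ = memSet E A (.meet C₁ C₂) :=
  Set.ext fun _ => ⟨fun h => mem_compl_of_deriv (.andA_inv h.1 h.2 hC),
    fun h => ⟨mem_compl_of_deriv (.andA_l h), mem_compl_of_deriv (.andA_r h)⟩⟩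

theorem fmemSet_join {C₁ C₂ : Cpt} (hC : Occurs (.join C₁ C₂) A) :
    fmemSet E A C₁ ∩ fmemSet E A C₂ = fmemSet E A (.join C₁ C₂) :=
  Set.ext fun _ => ⟨fun h => mem_compl_of_deriv (.orX_inv h.1 h.2 hC),
    fun h => ⟨mem_compl_of_deriv (.orX_l h), mem_compl_of_deriv (.orX_r h)⟩⟩

theorem gdn_Rb_fmemSet {C : Cpt} (hC : Occurs C A) :
    gdn (canonicalModel E A).Rb (fmemSet E A C) = memSet E A (.box C) := by
  refine Set.ext fun b => ⟨fun h => ?_, fun h y hy => mem_compl_of_deriv (.boxR h hy)⟩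
  have hbox := h _ (mem_compl_of_deriv (.create_x hC))
  exact mem_compl_of_deriv (.app_x (mem_compl_of_deriv (.adj_box_r (y := .cls C) hbox)))

theorem gup_Rd_memSet {C : Cpt} (hC : Occurs C A) :
    gup (fun b y => (canonicalModel E A).Rd y b) (memSet E A C) = fmemSet E A (.dia C) := by
  refine Set.ext fun y => ⟨fun h => ?_, fun h b hb => mem_compl_of_deriv (.diaR h hb)⟩
  have hdia := h _ (mem_compl_of_deriv (.create_a hC))
  exact mem_compl_of_deriv (.app_a (mem_compl_of_deriv (.adj_dia_l (b := .cls C) hdia)))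

theorem ci_eq_of_extent {C : Cpt} (hC : Occurs C A)
    (h₁ : ((canonicalModel E A).ci C).1 = memSet E A C)
    (h₂ : ((canonicalModel E A).ci C).2 =
      gup (canonicalModel E A).I ((canonicalModel E A).ci C).1) :
    ((canonicalModel E A).ci C).1 = memSet E A C ∧
      ((canonicalModel E A).ci C).2 = fmemSet E A C :=
  ⟨h₁, h₂.trans ((congrArg _ h₁).trans (gup_memSet hC))⟩

theorem ci_eq_of_intent {C : Cpt} (hC : Occurs C A)
    (h₂ : ((canonicalModel E A).ci C).2 = fmemSet E A C)
    (h₁ : ((canonicalModel E A).ci C).1 =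
      gdn (canonicalModel E A).I ((canonicalModel E A).ci C).2) :
    ((canonicalModel E A).ci C).1 = memSet E A C ∧
      ((canonicalModel E A).ci C).2 = fmemSet E A C :=
  ⟨h₁.trans ((congrArg _ h₂).trans (gdn_fmemSet hC)), h₂⟩

theorem ci_eq {C : Cpt} (hC : Occurs C A) :
    ((canonicalModel E A).ci C).1 = memSet E A C ∧
      ((canonicalModel E A).ci C).2 = fmemSet E A C := by
  induction C with
  | atom n => exact ci_eq_of_extent hC (Set.ext fun _ => rI_cls_iff_mem hC) rfl
  | meet C₁ C₂ ih₁ ih₂ =>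
    refine ci_eq_of_extent hC ?_ rfl
    rw [← memSet_meet hC, ← (ih₁ hC.meet_left).1, ← (ih₂ hC.meet_right).1]
    rfl
  | join C₁ C₂ ih₁ ih₂ =>
    refine ci_eq_of_intent hC ?_ rfl
    rw [← fmemSet_join hC, ← (ih₁ hC.join_left).2, ← (ih₂ hC.join_right).2]
    rfl
  | box C ih =>
    exact ci_eq_of_extent hC
      ((congrArg _ (ih hC.of_box).2).trans (gdn_Rb_fmemSet hC.of_box)) rfl
  | dia C ih =>
    exact ci_eq_of_intent hC
      ((congrArg _ (ih hC.of_dia).1).trans (gup_Rd_memSet hC.of_dia)) rfl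

theorem satAll (hnc : ¬ HasClash (Compl E A)) : (canonicalModel E A).SatAll A := by
  intro t ht
  have htc : t ∈ Compl E A := subset_compl ht
  rcases t with β | β
  · cases β with
    | mem b C =>
      show b ∈ ((canonicalModel E A).ci C).1
      rw [(ci_eq ⟨_, ht, Cpt.mem_subs_self C⟩).1]
      exact htc
    | fmem y C =>
      show y ∈ ((canonicalModel E A).ci C).2
      rw [(ci_eq ⟨_, ht, Cpt.mem_subs_self C⟩).2]
      exact htc
    | _ => exact htc
  · intro hsat
    cases β with
    | mem b C =>
      have hC : Occurs C A := ⟨_, ht, Cpt.mem_subs_self C⟩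
      change b ∈ ((canonicalModel E A).ci C).1 at hsat
      rw [(ci_eq hC).1] at hsat
      exact hnc ⟨_, by exact trivial, (rI_cls_iff_mem hC).2 hsat, mem_compl_of_deriv (.neg_b htc)⟩
    | fmem y C =>
      have hC : Occurs C A := ⟨_, ht, Cpt.mem_subs_self C⟩
      change y ∈ ((canonicalModel E A).ci C).2 at hsat
      rw [(ci_eq hC).2] at hsat
      exact hnc ⟨_, by exact trivial, (cls_rI_iff_fmem hC).2 hsat, mem_compl_of_deriv (.neg_x htc)⟩
    | _ => exact hnc ⟨_, by exact trivial, hsat, htc⟩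

end canonicalModel

/-! ### Termination -/

def Cpt.headBoxes : Cpt → ℤ
  | .atom _ => 0
  | .meet C₁ C₂ => max C₁.headBoxes C₂.headBoxes
  | .join C₁ C₂ => min C₁.headBoxes C₂.headBoxes
  | .box C => C.headBoxes + 1
  | .dia _ => 0

def Cpt.headDias : Cpt → ℤ
  | .atom _ => 0
  | .meet C₁ C₂ => min C₁.headDias C₂.headDias
  | .join C₁ C₂ => max C₁.headDias C₂.headDias
  | .box _ => 0
  | .dia C => C.headDias + 1

namespace Cpt

theorem headBoxes_nonneg (C : Cpt) : 0 ≤ C.headBoxes := by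
  induction C <;> simp only [headBoxes] <;> omega

theorem headDias_nonneg (C : Cpt) : 0 ≤ C.headDias := by
  induction C <;> simp only [headDias] <;> omega

theorem headBoxes_le_bd (C : Cpt) : C.headBoxes ≤ C.bd := by
  induction C <;> simp only [headBoxes, bd] <;> omega

theorem headDias_le_dd (C : Cpt) : C.headDias ≤ C.dd := by
  induction C <;> simp only [headDias, dd] <;> omega

theorem headBoxes_iterate_box (k : ℕ) (C : Cpt) : (box^[k] C).headBoxes = k + C.headBoxes := by
  induction k with
  | zero => simp
  | succ k ih => rw [Function.iterate_succ_apply', headBoxes, ih]; push_cast; ring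

theorem headDias_iterate_dia (k : ℕ) (C : Cpt) : (dia^[k] C).headDias = k + C.headDias := by
  induction k with
  | zero => simp
  | succ k ih => rw [Function.iterate_succ_apply', headDias, ih]; push_cast; ring

end Cpt

section Bounds
variable (A : Set Term) (N : ℕ)

def BoxWord (C : Cpt) : Prop := ∃ k ≤ N + 1, ∃ E, Occurs E A ∧ C = Cpt.box^[k] E

def DiaWord (C : Cpt) : Prop := ∃ k ≤ N + 1, ∃ E, Occurs E A ∧ C = Cpt.dia^[k] E

def ObName.boxCap : ObName → ℤ
  | .base _ => N + 1
  | .cls C => C.headBoxes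
  | .dia _ => 0
  | .bdia b => b.boxCap - 1

def ObName.dias : ObName → ℤ
  | .base _ => 0
  | .cls C => C.headDias
  | .dia b => b.dias + 1
  | .bdia _ => 0

def FtName.boxes : FtName → ℤ
  | .base _ => 0
  | .cls C => C.headBoxes
  | .box y => y.boxes + 1
  | .bbox y => y.boxes

def FtName.diaCap : FtName → ℤ
  | .base _ => N + 1
  | .cls C => C.headDias
  | .box _ => 0
  | .bbox y => y.diaCap - 1

def ObAdmissible : ObName → Prop
  | .base n => ObOccurs (.base n) A
  | .cls C => DiaWord A N C ∧ C.headBoxes ≤ N + 1 ∧ C.headDias ≤ N + 1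
  | .dia b => ObAdmissible b ∧ b.dias ≤ N
  | .bdia b => ObAdmissible b ∧ b.dias = 0 ∧ 1 ≤ b.boxCap N

def FtAdmissible : FtName → Prop
  | .base n => FtOccurs (.base n) A
  | .cls C => BoxWord A N C ∧ C.headBoxes ≤ N + 1 ∧ C.headDias ≤ N + 1
  | .box y => FtAdmissible y ∧ y.boxes ≤ N
  | .bbox y => FtAdmissible y ∧ y.boxes = 0 ∧ 1 ≤ y.diaCap N

/-- The termination invariant: `y.boxes` and `b.dias` count the modal prefixes of a name, while
`b.boxCap N` and `y.diaCap N` bound those its partners may carry. Every rule preserves these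
inequalities, so the generated names have at most `N + 1` prefixes of each kind. -/
def Bounded : PTerm → Prop
  | .rI b y => ObAdmissible A N b ∧ FtAdmissible A N y ∧
      y.boxes ≤ b.boxCap N ∧ b.dias ≤ y.diaCap N
  | .rbox b y => ObAdmissible A N b ∧ FtAdmissible A N y ∧
      y.boxes + 1 ≤ b.boxCap N ∧ b.dias = 0
  | .rdia y b => ObAdmissible A N b ∧ FtAdmissible A N y ∧
      y.boxes = 0 ∧ b.dias + 1 ≤ y.diaCap N
  | .mem b C => ObAdmissible A N b ∧ (BoxWord A N C ∨ DiaWord A N C) ∧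
      C.headBoxes ≤ b.boxCap N ∧ b.dias ≤ C.headDias
  | .fmem y C => FtAdmissible A N y ∧ (BoxWord A N C ∨ DiaWord A N C) ∧
      y.boxes ≤ C.headBoxes ∧ C.headDias ≤ y.diaCap N

variable {A N}

theorem ObName.dias_nonneg (b : ObName) : 0 ≤ b.dias := by
  induction b <;> simp only [dias] <;> first | omega | exact Cpt.headDias_nonneg _

theorem FtName.boxes_nonneg (y : FtName) : 0 ≤ y.boxes := by
  induction y <;> simp only [boxes] <;> first | omega | exact Cpt.headBoxes_nonneg _

theorem ObName.dias_diaS (b : ObName) : b.diaS.dias = b.dias + 1 := by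
  cases b <;> rfl

theorem ObName.boxCap_diaS (b : ObName) : b.diaS.boxCap N = 0 := by
  cases b <;> rfl

theorem FtName.boxes_boxS (y : FtName) : y.boxS.boxes = y.boxes + 1 := by
  cases y <;> rfl

theorem FtName.diaCap_boxS (y : FtName) : y.boxS.diaCap N = 0 := by
  cases y <;> rfl

theorem ObAdmissible.bounds {b : ObName} (h : ObAdmissible A N b) :
    0 ≤ b.boxCap N ∧ b.boxCap N ≤ N + 1 ∧ b.dias ≤ N + 1 := by
  induction b with
  | base n => simp only [ObName.boxCap, ObName.dias]; omega
  | cls C => exact ⟨C.headBoxes_nonneg, h.2⟩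
  | dia b ih => obtain ⟨-, h⟩ := h; simp only [ObName.boxCap, ObName.dias]; omega
  | bdia b ih =>
    obtain ⟨h, -, h'⟩ := h
    have := ih h
    simp only [ObName.boxCap, ObName.dias]
    omega

theorem FtAdmissible.bounds {y : FtName} (h : FtAdmissible A N y) :
    0 ≤ y.diaCap N ∧ y.diaCap N ≤ N + 1 ∧ y.boxes ≤ N + 1 := by
  induction y with
  | base n => simp only [FtName.diaCap, FtName.boxes]; omega
  | cls C => exact ⟨C.headDias_nonneg, h.2.2, h.2.1⟩
  | box y ih => obtain ⟨-, h⟩ := h; simp only [FtName.diaCap, FtName.boxes]; omega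
  | bbox y ih =>
    obtain ⟨h, -, h'⟩ := h
    have := ih h
    simp only [FtName.diaCap, FtName.boxes]
    omega

theorem BoxWord.of_occurs {C : Cpt} (hC : Occurs C A) : BoxWord A N C := ⟨0, by omega, C, hC, rfl⟩

theorem DiaWord.of_occurs {C : Cpt} (hC : Occurs C A) : DiaWord A N C := ⟨0, by omega, C, hC, rfl⟩

theorem occurs_of_isWord {C : Cpt} (h : BoxWord A N C ∨ DiaWord A N C)
    (hbox : ∀ D, C ≠ .box D) (hdia : ∀ D, C ≠ .dia D) : Occurs C A := by
  rcases h with ⟨k, -, E, hE, rfl⟩ | ⟨k, -, E, hE, rfl⟩ <;> cases k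
  · exact hE
  · exact absurd (Function.iterate_succ_apply' _ _ _) (hbox _)
  · exact hE
  · exact absurd (Function.iterate_succ_apply' _ _ _) (hdia _)

theorem bounded_rbox_iff_bdia {b : ObName} {y : FtName} :
    Bounded A N (.rbox b y) ↔ Bounded A N (.rI b.bdia y) := by
  show _ ↔ (_ ∧ b.dias = 0 ∧ 1 ≤ b.boxCap N) ∧ _ ∧ y.boxes ≤ b.boxCap N - 1 ∧ 0 ≤ y.diaCap N
  have := y.boxes_nonneg
  constructor
  · rintro ⟨hb, hy, h₁, h₂⟩
    exact ⟨⟨hb, h₂, by omega⟩, hy, by omega, hy.bounds.1⟩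
  · rintro ⟨⟨hb, h₂, -⟩, hy, h₁, -⟩
    exact ⟨hb, hy, by omega, h₂⟩

theorem bounded_rdia_iff_bbox {b : ObName} {y : FtName} :
    Bounded A N (.rdia y b) ↔ Bounded A N (.rI b y.bbox) := by
  show _ ↔ _ ∧ (_ ∧ y.boxes = 0 ∧ 1 ≤ y.diaCap N) ∧ y.boxes ≤ b.boxCap N ∧ b.dias ≤ y.diaCap N - 1
  have := b.dias_nonneg
  constructor
  · rintro ⟨hb, hy, h₁, h₂⟩
    exact ⟨hb, ⟨hy, h₁, by omega⟩, by have := hb.bounds; omega, by omega⟩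
  · rintro ⟨hb, ⟨hy, h₁, -⟩, -, h₂⟩
    exact ⟨hb, hy, h₁, by omega⟩

theorem obAdmissible_of_occurs (hWF : ABoxWF A) {b : ObName} (hb : ObOccurs b A) :
    ObAdmissible A N b ∧ b.boxCap N = N + 1 ∧ b.dias = 0 := by
  obtain ⟨n, rfl⟩ := hb.isBase hWF
  exact ⟨hb, rfl, rfl⟩

theorem ftAdmissible_of_occurs (hWF : ABoxWF A) {y : FtName} (hy : FtOccurs y A) :
    FtAdmissible A N y ∧ y.boxes = 0 ∧ y.diaCap N = N + 1 := by
  obtain ⟨n, rfl⟩ := hy.isBase hWF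
  exact ⟨hy, rfl, rfl⟩

theorem Bounded.meet {b : ObName} {C₁ C₂ : Cpt} (h : Bounded A N (.mem b (.meet C₁ C₂))) :
    Bounded A N (.mem b C₁) ∧ Bounded A N (.mem b C₂) := by
  obtain ⟨hb, hw, g₁, g₂⟩ := h
  have hC := occurs_of_isWord hw (fun _ => nofun) (fun _ => nofun)
  exact ⟨⟨hb, .inl (.of_occurs hC.meet_left), (le_max_left _ _).trans g₁,
      g₂.trans (min_le_left _ _)⟩,
    ⟨hb, .inl (.of_occurs hC.meet_right), (le_max_right _ _).trans g₁,
      g₂.trans (min_le_right _ _)⟩⟩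

theorem Bounded.join {y : FtName} {C₁ C₂ : Cpt} (h : Bounded A N (.fmem y (.join C₁ C₂))) :
    Bounded A N (.fmem y C₁) ∧ Bounded A N (.fmem y C₂) := by
  obtain ⟨hy, hw, g₁, g₂⟩ := h
  have hC := occurs_of_isWord hw (fun _ => nofun) (fun _ => nofun)
  exact ⟨⟨hy, .inl (.of_occurs hC.join_left), g₁.trans (min_le_left _ _),
      (le_max_left _ _).trans g₂⟩,
    ⟨hy, .inl (.of_occurs hC.join_right), g₁.trans (min_le_right _ _),
      (le_max_right _ _).trans g₂⟩⟩

variable (hN : ∀ C, Occurs C A → C.bd ≤ N ∧ C.dd ≤ N)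
include hN

theorem headBoxes_le_of_occurs {C : Cpt} (hC : Occurs C A) : C.headBoxes ≤ N :=
  C.headBoxes_le_bd.trans (by exact_mod_cast (hN C hC).1)

theorem headDias_le_of_occurs {C : Cpt} (hC : Occurs C A) : C.headDias ≤ N :=
  C.headDias_le_dd.trans (by exact_mod_cast (hN C hC).2)

theorem BoxWord.unbox {C : Cpt} (h : BoxWord A N (.box C)) : BoxWord A N C ∧ C.headDias ≤ N := by
  obtain ⟨k, hk, E, hE, hC⟩ := h
  cases k with
  | zero =>
    obtain rfl : C.box = E := hC
    exact ⟨.of_occurs hE.of_box, headDias_le_of_occurs hN hE.of_box⟩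
  | succ k =>
    rw [Function.iterate_succ_apply'] at hC
    cases hC
    refine ⟨⟨k, by omega, E, hE, rfl⟩, ?_⟩
    cases k with
    | zero => exact headDias_le_of_occurs hN hE
    | succ k => rw [Function.iterate_succ_apply', Cpt.headDias]; omega

theorem DiaWord.undia {C : Cpt} (h : DiaWord A N (.dia C)) : DiaWord A N C ∧ C.headBoxes ≤ N := by
  obtain ⟨k, hk, E, hE, hC⟩ := h
  cases k with
  | zero =>
    obtain rfl : C.dia = E := hC
    exact ⟨.of_occurs hE.of_dia, headBoxes_le_of_occurs hN hE.of_dia⟩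
  | succ k =>
    rw [Function.iterate_succ_apply'] at hC
    cases hC
    refine ⟨⟨k, by omega, E, hE, rfl⟩, ?_⟩
    cases k with
    | zero => exact headBoxes_le_of_occurs hN hE
    | succ k => rw [Function.iterate_succ_apply', Cpt.headBoxes]; omega

theorem ftAdmissible_boxS_iff {y : FtName} :
    FtAdmissible A N y.boxS ↔ FtAdmissible A N y ∧ y.boxes ≤ N := by
  cases y with
  | cls C =>
    show (BoxWord A N C.box ∧ C.headBoxes + 1 ≤ N + 1 ∧ (0 : ℤ) ≤ N + 1) ↔
      (BoxWord A N C ∧ C.headBoxes ≤ N + 1 ∧ C.headDias ≤ N + 1) ∧ C.headBoxes ≤ N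
    constructor
    · rintro ⟨hC, h, -⟩
      obtain ⟨hC, hdia⟩ := hC.unbox hN
      exact ⟨⟨hC, by omega, by omega⟩, by omega⟩
    · rintro ⟨⟨⟨k, hk, E, hE, rfl⟩, -, -⟩, h⟩
      have := Cpt.headBoxes_iterate_box k E
      have := E.headBoxes_nonneg
      exact ⟨⟨k + 1, by omega, E, hE, (Function.iterate_succ_apply' _ _ _).symm⟩,
        by omega, by omega⟩
  | _ => rfl

theorem obAdmissible_diaS_iff {b : ObName} :
    ObAdmissible A N b.diaS ↔ ObAdmissible A N b ∧ b.dias ≤ N := by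
  cases b with
  | cls C =>
    show (DiaWord A N C.dia ∧ (0 : ℤ) ≤ N + 1 ∧ C.headDias + 1 ≤ N + 1) ↔
      (DiaWord A N C ∧ C.headBoxes ≤ N + 1 ∧ C.headDias ≤ N + 1) ∧ C.headDias ≤ N
    constructor
    · rintro ⟨hC, -, h⟩
      obtain ⟨hC, hbox⟩ := hC.undia hN
      exact ⟨⟨hC, by omega, by omega⟩, by omega⟩
    · rintro ⟨⟨⟨k, hk, E, hE, rfl⟩, -, -⟩, h⟩
      have := Cpt.headDias_iterate_dia k E
      have := E.headDias_nonneg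
      exact ⟨⟨k + 1, by omega, E, hE, (Function.iterate_succ_apply' _ _ _).symm⟩,
        by omega, by omega⟩
  | _ => rfl

theorem bounded_rbox_iff_boxS {b : ObName} {y : FtName} :
    Bounded A N (.rbox b y) ↔ Bounded A N (.rI b y.boxS) := by
  show _ ↔ _ ∧ FtAdmissible A N y.boxS ∧ y.boxS.boxes ≤ _ ∧ _ ≤ y.boxS.diaCap N
  rw [ftAdmissible_boxS_iff hN, FtName.boxes_boxS, FtName.diaCap_boxS]
  have := b.dias_nonneg
  constructor
  · rintro ⟨hb, hy, h₁, h₂⟩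
    have := hb.bounds
    exact ⟨hb, ⟨hy, by omega⟩, h₁, by omega⟩
  · rintro ⟨hb, ⟨hy, -⟩, h₁, h₂⟩
    exact ⟨hb, hy, h₁, by omega⟩

theorem bounded_rdia_iff_diaS {b : ObName} {y : FtName} :
    Bounded A N (.rdia y b) ↔ Bounded A N (.rI b.diaS y) := by
  show _ ↔ ObAdmissible A N b.diaS ∧ _ ∧ _ ≤ b.diaS.boxCap N ∧ b.diaS.dias ≤ _
  rw [obAdmissible_diaS_iff hN, ObName.dias_diaS, ObName.boxCap_diaS]
  have := y.boxes_nonneg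
  constructor
  · rintro ⟨hb, hy, h₁, h₂⟩
    have := hy.bounds
    exact ⟨⟨hb, by omega⟩, hy, by omega, h₂⟩
  · rintro ⟨⟨hb, -⟩, hy, h₁, h₂⟩
    exact ⟨hb, hy, by omega, h₂⟩

theorem bounded_create {C : Cpt} (hC : Occurs C A) :
    Bounded A N (.mem (.cls C) C) ∧ Bounded A N (.fmem (.cls C) C) := by
  have := headBoxes_le_of_occurs hN hC
  have := headDias_le_of_occurs hN hC
  exact ⟨⟨⟨.of_occurs hC, by omega, by omega⟩, .inl (.of_occurs hC), le_rfl, le_rfl⟩,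
    ⟨⟨.of_occurs hC, by omega, by omega⟩, .inl (.of_occurs hC), le_rfl, le_rfl⟩⟩

theorem bounded_of_mem (hWF : ABoxWF A) {β : PTerm} (hβ : Term.pos β ∈ A) : Bounded A N β := by
  have hob : ∀ b ∈ β.objs, ObAdmissible A N b ∧ b.boxCap N = N + 1 ∧ b.dias = 0 :=
    fun b hb => obAdmissible_of_occurs hWF ⟨_, hβ, hb⟩
  have hft : ∀ y ∈ β.feats, FtAdmissible A N y ∧ y.boxes = 0 ∧ y.diaCap N = N + 1 :=
    fun y hy => ftAdmissible_of_occurs hWF ⟨_, hβ, hy⟩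
  cases β with
  | rI b y | rbox b y | rdia y b =>
    obtain ⟨hb, hb₁, hb₂⟩ := hob b (by simp [PTerm.objs])
    obtain ⟨hy, hy₁, hy₂⟩ := hft y (by simp [PTerm.feats])
    exact ⟨hb, hy, by omega, by omega⟩
  | mem b C =>
    have hC : Occurs C A := ⟨_, hβ, Cpt.mem_subs_self C⟩
    obtain ⟨hb, hb₁, hb₂⟩ := hob b (by simp [PTerm.objs])
    have := headBoxes_le_of_occurs hN hC
    exact ⟨hb, .inl (.of_occurs hC), by omega, hb₂ ▸ C.headDias_nonneg⟩
  | fmem y C =>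
    have hC : Occurs C A := ⟨_, hβ, Cpt.mem_subs_self C⟩
    obtain ⟨hy, hy₁, hy₂⟩ := hft y (by simp [PTerm.feats])
    have := headDias_le_of_occurs hN hC
    exact ⟨hy, .inl (.of_occurs hC), hy₁ ▸ C.headBoxes_nonneg, by omega⟩

theorem bounded_of_deriv {S : Set Term} {β : PTerm}
    (hS : ∀ t ∈ S, WithNegOrigin A (Bounded A N) t) (hd : Deriv noExt A S (.pos β)) :
    Bounded A N β := by
  have H : ∀ {β}, Term.pos β ∈ S → Bounded A N β := fun h => hS _ h
  cases hd with
  | create_a hC => exact (bounded_create hN hC).1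
  | create_x hC => exact (bounded_create hN hC).2
  | basic h₁ h₂ =>
    obtain ⟨hb, -, g₁, g₂⟩ := H h₁
    obtain ⟨hy, -, g₃, g₄⟩ := H h₂
    exact ⟨hb, hy, g₃.trans g₁, g₂.trans g₄⟩
  | andA_l h₁ => exact (H h₁).meet.1
  | andA_r h₁ => exact (H h₁).meet.2
  | orX_l h₁ => exact (H h₁).join.1
  | orX_r h₁ => exact (H h₁).join.2
  | boxR h₁ h₂ =>
    obtain ⟨hb, -, g₁, g₂⟩ := H h₁
    obtain ⟨hy, -, g₃, -⟩ := H h₂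
    have := hb.bounds
    exact ⟨hb, hy, by simp only [Cpt.headBoxes] at g₁; omega, le_antisymm g₂ (ObName.dias_nonneg _)⟩
  | diaR h₁ h₂ =>
    obtain ⟨hy, -, g₁, g₂⟩ := H h₁
    obtain ⟨hb, -, -, g₄⟩ := H h₂
    exact ⟨hb, hy, le_antisymm g₁ (FtName.boxes_nonneg _), by simp only [Cpt.headDias] at g₂; omega⟩
  | andA_inv h₁ h₂ hC =>
    obtain ⟨hb, -, g₁, g₂⟩ := H h₁
    obtain ⟨-, -, g₃, g₄⟩ := H h₂
    exact ⟨hb, .inl (.of_occurs hC), max_le g₁ g₃, le_min g₂ g₄⟩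
  | orX_inv h₁ h₂ hC =>
    obtain ⟨hy, -, g₁, g₂⟩ := H h₁
    obtain ⟨-, -, g₃, g₄⟩ := H h₂
    exact ⟨hy, .inl (.of_occurs hC), le_min g₁ g₃, max_le g₂ g₄⟩
  | adj_box_l h₁ => exact bounded_rbox_iff_bdia.1 (H h₁)
  | adj_box_r h₁ => exact (bounded_rbox_iff_boxS hN).1 (H h₁)
  | adj_dia_l h₁ => exact (bounded_rdia_iff_diaS hN).1 (H h₁)
  | adj_dia_r h₁ => exact bounded_rdia_iff_bbox.1 (H h₁)
  | icomp_box h₁ => exact (bounded_rbox_iff_boxS hN).2 (H h₁)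
  | icomp_bbox h₁ => exact bounded_rdia_iff_bbox.2 (H h₁)
  | icomp_dia h₁ => exact (bounded_rdia_iff_diaS hN).2 (H h₁)
  | icomp_bdia h₁ => exact bounded_rbox_iff_bdia.2 (H h₁)
  | app_x h₁ => obtain ⟨hb, hy, g₁, g₂⟩ := H h₁; exact ⟨hb, .inl hy.1, g₁, g₂⟩
  | app_a h₁ => obtain ⟨hb, hy, g₁, g₂⟩ := H h₁; exact ⟨hy, .inr hb.1, g₁, g₂⟩
  | extra h => exact h.elim

theorem bounded_of_mem_compl (hWF : ABoxWF A) {E : Term → Term → Prop}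
    (hE : RulePreserves E A (Bounded A N))
    {t : Term} (ht : t ∈ Compl E A) : WithNegOrigin A (Bounded A N) t :=
  withNegOrigin_of_mem_compl (fun _ => bounded_of_mem hN hWF) hE (bounded_of_deriv hN) ht

end Bounds

theorem Cpt.card_subs_le (C : Cpt) : C.subs.card ≤ C.csize := by
  induction C with
  | atom n => simp [subs, csize]
  | meet C₁ C₂ ih₁ ih₂ | join C₁ C₂ ih₁ ih₂ =>
    have := Finset.card_union_le C₁.subs C₂.subs
    have := Finset.card_insert_le (C₁.meet C₂) (C₁.subs ∪ C₂.subs)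
    have := Finset.card_insert_le (C₁.join C₂) (C₁.subs ∪ C₂.subs)
    simp only [subs, csize]
    omega
  | box C ih | dia C ih =>
    have := Finset.card_insert_le C.box C.subs
    have := Finset.card_insert_le C.dia C.subs
    simp only [subs, csize]
    omega

theorem Cpt.csize_le_of_mem_subs {C D : Cpt} (h : D ∈ C.subs) : D.csize ≤ C.csize := by
  induction C with
  | atom n => simp_all [subs]
  | meet C₁ C₂ ih₁ ih₂ | join C₁ C₂ ih₁ ih₂ =>
    simp only [subs, Finset.mem_insert, Finset.mem_union] at h
    rcases h with rfl | h | h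
    · exact le_rfl
    · exact (ih₁ h).trans (by simp only [csize]; omega)
    · exact (ih₂ h).trans (by simp only [csize]; omega)
  | box C ih | dia C ih =>
    simp only [subs, Finset.mem_insert] at h
    rcases h with rfl | h
    · exact le_rfl
    · exact (ih h).trans (by simp only [csize]; omega)

theorem Cpt.bd_le_csize (C : Cpt) : C.bd ≤ C.csize := by
  induction C <;> simp only [bd, csize] <;> omega

theorem Cpt.dd_le_csize (C : Cpt) : C.dd ≤ C.csize := by
  induction C <;> simp only [dd, csize] <;> omega

theorem Term.one_le_tsize (t : Term) : 1 ≤ t.tsize := by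
  cases t <;> simp only [tsize] <;> omega

theorem Term.card_cpts_le (t : Term) : t.cpts.card ≤ t.tsize := by
  rcases t with (_ | _ | _ | _ | C) | (_ | _ | _ | _ | C) <;>
    simp only [cpts, tsize, PTerm.psize, Finset.card_empty] <;>
    first | omega | exact (Cpt.card_subs_le _).trans (by omega)

theorem Term.csize_le_of_mem_cpts {t : Term} {C : Cpt} (h : C ∈ t.cpts) : C.csize ≤ t.tsize := by
  rcases t with (_ | _ | _ | _ | _) | (_ | _ | _ | _ | _) <;>
    simp only [cpts, Finset.notMem_empty] at h <;>
    exact (Cpt.csize_le_of_mem_subs h).trans (by simp only [tsize, PTerm.psize]; omega)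

theorem Term.length_objs_le (t : Term) : t.objs.length ≤ 1 := by
  rcases t with (_ | _ | _ | _ | _) | (_ | _ | _ | _ | _) <;> simp [objs, PTerm.objs]

theorem Term.length_feats_le (t : Term) : t.feats.length ≤ 1 := by
  rcases t with (_ | _ | _ | _ | _) | (_ | _ | _ | _ | _) <;> simp [feats, PTerm.feats]

section Size
variable (A : Finset Term)

theorem card_le_aboxSize : A.card ≤ aboxSize A := by
  simpa [aboxSize] using Finset.sum_le_sum fun t (_ : t ∈ A) => t.one_le_tsize

theorem card_aboxCpts_le : (aboxCpts A).card ≤ aboxSize A :=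
  Finset.card_biUnion_le.trans (Finset.sum_le_sum fun t _ => t.card_cpts_le)

theorem depth_le_aboxSize (C : Cpt) (hC : Occurs C ↑A) : C.bd ≤ aboxSize A ∧ C.dd ≤ aboxSize A := by
  obtain ⟨t, ht, hCt⟩ := hC
  have : C.csize ≤ aboxSize A :=
    (Term.csize_le_of_mem_cpts hCt).trans (Finset.single_le_sum (fun _ _ => Nat.zero_le _) ht)
  exact ⟨C.bd_le_csize.trans this, C.dd_le_csize.trans this⟩

def obNames : Finset ObName := A.biUnion fun t => t.objs.toFinset

def ftNames : Finset FtName := A.biUnion fun t => t.feats.toFinset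

theorem card_obNames_le : (obNames A).card ≤ aboxSize A :=
  Finset.card_biUnion_le.trans <| Finset.sum_le_sum fun t _ =>
    t.objs.toFinset_card_le.trans (t.length_objs_le.trans t.one_le_tsize)

theorem card_ftNames_le : (ftNames A).card ≤ aboxSize A :=
  Finset.card_biUnion_le.trans <| Finset.sum_le_sum fun t _ =>
    t.feats.toFinset_card_le.trans (t.length_feats_le.trans t.one_le_tsize)

end Size

section Universe
variable (A : Finset Term) (N : ℕ)

def wordSet : Finset Cpt :=
  (Finset.range (N + 2) ×ˢ aboxCpts A).image (fun p => Cpt.box^[p.1] p.2) ∪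
    (Finset.range (N + 2) ×ˢ aboxCpts A).image (fun p => Cpt.dia^[p.1] p.2)

def obUniv : Finset ObName :=
  (Finset.range (N + 2) ×ˢ Finset.range (N + 2) ×ˢ (obNames A ∪ (wordSet A N).image .cls)).image
    fun p => ObName.dia^[p.1] (ObName.bdia^[p.2.1] p.2.2)

def ftUniv : Finset FtName :=
  (Finset.range (N + 2) ×ˢ Finset.range (N + 2) ×ˢ (ftNames A ∪ (wordSet A N).image .cls)).image
    fun p => FtName.box^[p.1] (FtName.bbox^[p.2.1] p.2.2)

def ptermUniv : Finset PTerm :=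
  (obUniv A N ×ˢ ftUniv A N).biUnion (fun p => {.rI p.1 p.2, .rbox p.1 p.2, .rdia p.2 p.1}) ∪
    (obUniv A N ×ˢ wordSet A N).image (fun p => .mem p.1 p.2) ∪
    (ftUniv A N ×ˢ wordSet A N).image (fun p => .fmem p.1 p.2)

/-- Contains every term of a completion of `A` once `N` bounds the modal depths in `A`. -/
def termUniv : Finset Term :=
  A ∪ (ptermUniv A N).image .pos ∪ (ptermUniv A N).image .neg

variable {A N}

theorem mem_aboxCpts {C : Cpt} (hC : Occurs C ↑A) : C ∈ aboxCpts A :=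
  Finset.mem_biUnion.2 hC

theorem mem_wordSet {C : Cpt} (h : BoxWord ↑A N C ∨ DiaWord ↑A N C) : C ∈ wordSet A N := by
  rcases h with ⟨k, hk, E, hE, rfl⟩ | ⟨k, hk, E, hE, rfl⟩
  · exact Finset.mem_union_left _ <| Finset.mem_image.2
      ⟨(k, E), Finset.mem_product.2 ⟨Finset.mem_range.2 (by omega), mem_aboxCpts hE⟩, rfl⟩
  · exact Finset.mem_union_right _ <| Finset.mem_image.2
      ⟨(k, E), Finset.mem_product.2 ⟨Finset.mem_range.2 (by omega), mem_aboxCpts hE⟩, rfl⟩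

theorem ObName.dias_iterate_dia (i : ℕ) (b : ObName) : (ObName.dia^[i] b).dias = i + b.dias := by
  induction i with
  | zero => simp
  | succ i ih => rw [Function.iterate_succ_apply', ObName.dias, ih]; push_cast; ring

theorem ObName.boxCap_iterate_bdia (j : ℕ) (b : ObName) :
    (ObName.bdia^[j] b).boxCap N = b.boxCap N - j := by
  induction j with
  | zero => simp
  | succ j ih => rw [Function.iterate_succ_apply', ObName.boxCap, ih]; push_cast; ring

theorem FtName.boxes_iterate_box (i : ℕ) (y : FtName) : (FtName.box^[i] y).boxes = i + y.boxes := by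
  induction i with
  | zero => simp
  | succ i ih => rw [Function.iterate_succ_apply', FtName.boxes, ih]; push_cast; ring

theorem FtName.diaCap_iterate_bbox (j : ℕ) (y : FtName) :
    (FtName.bbox^[j] y).diaCap N = y.diaCap N - j := by
  induction j with
  | zero => simp
  | succ j ih => rw [Function.iterate_succ_apply', FtName.diaCap, ih]; push_cast; ring

theorem ObAdmissible.mem_obUniv {b : ObName} (h : ObAdmissible (↑A) N b) : b ∈ obUniv A N := by
  suffices ∃ i ≤ N + 1, ∃ j ≤ N + 1, ∃ c ∈ obNames A ∪ (wordSet A N).image .cls,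
      ObAdmissible (↑A) N c ∧ b = ObName.dia^[i] (ObName.bdia^[j] c) by
    obtain ⟨i, hi, j, hj, c, hc, -, rfl⟩ := this
    exact Finset.mem_image.2 ⟨(i, j, c), Finset.mem_product.2 ⟨Finset.mem_range.2 (by omega),
      Finset.mem_product.2 ⟨Finset.mem_range.2 (show j < N + 2 by omega), hc⟩⟩, rfl⟩
  induction b with
  | base n =>
    refine ⟨0, by omega, 0, by omega, _, Finset.mem_union_left _ ?_, h, rfl⟩
    obtain ⟨t, ht, hb⟩ := h
    exact Finset.mem_biUnion.2 ⟨t, ht, List.mem_toFinset.2 hb⟩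
  | cls C =>
    exact ⟨0, by omega, 0, by omega, _,
      Finset.mem_union_right _ (Finset.mem_image_of_mem _ (mem_wordSet (.inr h.1))), h, rfl⟩
  | dia b ih =>
    obtain ⟨i, hi, j, hj, c, hc, hcA, rfl⟩ := ih h.1
    have := ObName.dias_iterate_dia i (ObName.bdia^[j] c)
    have := (ObName.bdia^[j] c).dias_nonneg
    exact ⟨i + 1, by have := h.2; omega, j, hj, c, hc, hcA,
      (Function.iterate_succ_apply' _ _ _).symm⟩
  | bdia b ih =>
    obtain ⟨i, hi, j, hj, c, hc, hcA, rfl⟩ := ih h.1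
    have := ObName.dias_iterate_dia i (ObName.bdia^[j] c)
    have := (ObName.bdia^[j] c).dias_nonneg
    obtain rfl : i = 0 := by have := h.2.1; omega
    have hcap : 1 ≤ (ObName.bdia^[j] c).boxCap N := h.2.2
    rw [ObName.boxCap_iterate_bdia] at hcap
    have := hcA.bounds
    exact ⟨0, by omega, j + 1, by omega, c, hc, hcA,
      (Function.iterate_succ_apply' ObName.bdia j c).symm⟩

theorem FtAdmissible.mem_ftUniv {y : FtName} (h : FtAdmissible (↑A) N y) : y ∈ ftUniv A N := by
  suffices ∃ i ≤ N + 1, ∃ j ≤ N + 1, ∃ c ∈ ftNames A ∪ (wordSet A N).image .cls,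
      FtAdmissible (↑A) N c ∧ y = FtName.box^[i] (FtName.bbox^[j] c) by
    obtain ⟨i, hi, j, hj, c, hc, -, rfl⟩ := this
    exact Finset.mem_image.2 ⟨(i, j, c), Finset.mem_product.2 ⟨Finset.mem_range.2 (by omega),
      Finset.mem_product.2 ⟨Finset.mem_range.2 (show j < N + 2 by omega), hc⟩⟩, rfl⟩
  induction y with
  | base n =>
    refine ⟨0, by omega, 0, by omega, _, Finset.mem_union_left _ ?_, h, rfl⟩
    obtain ⟨t, ht, hy⟩ := h
    exact Finset.mem_biUnion.2 ⟨t, ht, List.mem_toFinset.2 hy⟩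
  | cls C =>
    exact ⟨0, by omega, 0, by omega, _,
      Finset.mem_union_right _ (Finset.mem_image_of_mem _ (mem_wordSet (.inl h.1))), h, rfl⟩
  | box y ih =>
    obtain ⟨i, hi, j, hj, c, hc, hcA, rfl⟩ := ih h.1
    have := FtName.boxes_iterate_box i (FtName.bbox^[j] c)
    have := (FtName.bbox^[j] c).boxes_nonneg
    exact ⟨i + 1, by have := h.2; omega, j, hj, c, hc, hcA,
      (Function.iterate_succ_apply' _ _ _).symm⟩
  | bbox y ih =>
    obtain ⟨i, hi, j, hj, c, hc, hcA, rfl⟩ := ih h.1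
    have := FtName.boxes_iterate_box i (FtName.bbox^[j] c)
    have := (FtName.bbox^[j] c).boxes_nonneg
    obtain rfl : i = 0 := by have := h.2.1; omega
    have hcap : 1 ≤ (FtName.bbox^[j] c).diaCap N := h.2.2
    rw [FtName.diaCap_iterate_bbox] at hcap
    have := hcA.bounds
    exact ⟨0, by omega, j + 1, by omega, c, hc, hcA,
      (Function.iterate_succ_apply' FtName.bbox j c).symm⟩

theorem Bounded.mem_ptermUniv {β : PTerm} (h : Bounded (↑A) N β) : β ∈ ptermUniv A N := by
  simp only [ptermUniv, Finset.mem_union, Finset.mem_biUnion, Finset.mem_image,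
    Finset.mem_product, Prod.exists]
  cases β with
  | rI b y | rbox b y | rdia y b =>
    exact .inl (.inl ⟨b, y, ⟨h.1.mem_obUniv, h.2.1.mem_ftUniv⟩, by simp⟩)
  | mem b C => exact .inl (.inr ⟨b, C, ⟨h.1.mem_obUniv, mem_wordSet h.2.1⟩, rfl⟩)
  | fmem y C => exact .inr ⟨y, C, ⟨h.1.mem_ftUniv, mem_wordSet h.2.1⟩, rfl⟩

variable (hN : ∀ C, Occurs C ↑A → C.bd ≤ N ∧ C.dd ≤ N)
include hN

theorem NegOrigin.mem_or_bounded (hWF : ABoxWF ↑A) {β : PTerm} (h : NegOrigin (↑A) β) :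
    Term.neg β ∈ A ∨ Bounded (↑A) N β := by
  rcases h with h | ⟨b, C, rfl, h⟩ | ⟨y, C, rfl, h⟩
  · exact .inl h
  · have hC : Occurs C ↑A := ⟨_, h, Cpt.mem_subs_self C⟩
    obtain ⟨hb, hb₁, hb₂⟩ := obAdmissible_of_occurs (N := N) (b := b) hWF
      ⟨_, h, by simp [Term.objs, PTerm.objs]⟩
    have := headBoxes_le_of_occurs hN hC
    have := headDias_le_of_occurs hN hC
    exact .inr ⟨hb, ⟨.of_occurs hC, by omega, by omega⟩, by simp only [FtName.boxes]; omega,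
      by simp only [FtName.diaCap]; have := C.headDias_nonneg; omega⟩
  · have hC : Occurs C ↑A := ⟨_, h, Cpt.mem_subs_self C⟩
    obtain ⟨hy, hy₁, hy₂⟩ := ftAdmissible_of_occurs (N := N) (y := y) hWF
      ⟨_, h, by simp [Term.feats, PTerm.feats]⟩
    have := headBoxes_le_of_occurs hN hC
    have := headDias_le_of_occurs hN hC
    exact .inr ⟨⟨.of_occurs hC, by omega, by omega⟩, hy,
      by simp only [ObName.boxCap]; have := C.headBoxes_nonneg; omega,
      by simp only [ObName.dias]; omega⟩

theorem mem_termUniv (hWF : ABoxWF ↑A) {t : Term} (h : WithNegOrigin (↑A) (Bounded (↑A) N) t) :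
    t ∈ termUniv A N := by
  simp only [termUniv, Finset.mem_union, Finset.mem_image]
  rcases t with β | β
  · exact .inl (.inr ⟨β, Bounded.mem_ptermUniv h, rfl⟩)
  · rcases NegOrigin.mem_or_bounded hN hWF h with h | h
    · exact .inl (.inl h)
    · exact .inr ⟨β, h.mem_ptermUniv, rfl⟩

end Universe

section Card
variable (A : Finset Term) (N : ℕ)

theorem card_wordSet_le : (wordSet A N).card ≤ 2 * ((N + 2) * (aboxCpts A).card) := by
  refine (Finset.card_union_le _ _).trans ?_
  have h₁ := (Finset.card_image_le (s := Finset.range (N + 2) ×ˢ aboxCpts A)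
    (f := fun p => Cpt.box^[p.1] p.2))
  have h₂ := (Finset.card_image_le (s := Finset.range (N + 2) ×ˢ aboxCpts A)
    (f := fun p => Cpt.dia^[p.1] p.2))
  rw [Finset.card_product, Finset.card_range] at h₁ h₂
  omega

theorem card_obUniv_le :
    (obUniv A N).card ≤ (N + 2) * ((N + 2) * ((obNames A).card + (wordSet A N).card)) := by
  refine Finset.card_image_le.trans ?_
  rw [Finset.card_product, Finset.card_product, Finset.card_range]
  gcongr
  have := Finset.card_image_le (s := wordSet A N) (f := ObName.cls)
  have := Finset.card_union_le (obNames A) ((wordSet A N).image ObName.cls)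
  omega

theorem card_ftUniv_le :
    (ftUniv A N).card ≤ (N + 2) * ((N + 2) * ((ftNames A).card + (wordSet A N).card)) := by
  refine Finset.card_image_le.trans ?_
  rw [Finset.card_product, Finset.card_product, Finset.card_range]
  gcongr
  have := Finset.card_image_le (s := wordSet A N) (f := FtName.cls)
  have := Finset.card_union_le (ftNames A) ((wordSet A N).image FtName.cls)
  omega

theorem card_ptermUniv_le : (ptermUniv A N).card ≤
    3 * ((obUniv A N).card * (ftUniv A N).card) + (obUniv A N).card * (wordSet A N).card +
      (ftUniv A N).card * (wordSet A N).card := by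
  refine (Finset.card_union_le _ _).trans (add_le_add ((Finset.card_union_le _ _).trans
    (add_le_add ?_ ?_)) ?_)
  · refine Finset.card_biUnion_le.trans ?_
    calc _ ≤ ∑ _p ∈ obUniv A N ×ˢ ftUniv A N, 3 := Finset.sum_le_sum fun _ _ => Finset.card_le_three
      _ = _ := by rw [Finset.sum_const, Finset.card_product, smul_eq_mul, mul_comm]
  · exact Finset.card_image_le.trans (Finset.card_product _ _).le
  · exact Finset.card_image_le.trans (Finset.card_product _ _).le

theorem card_termUniv_le :
    (termUniv A N).card ≤ A.card + 2 * (ptermUniv A N).card := by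
  have := Finset.card_union_le (A ∪ (ptermUniv A N).image .pos) ((ptermUniv A N).image .neg)
  have := Finset.card_union_le A ((ptermUniv A N).image .pos)
  have := Finset.card_image_le (s := ptermUniv A N) (f := Term.pos)
  have := Finset.card_image_le (s := ptermUniv A N) (f := Term.neg)
  simp only [termUniv]
  omega

theorem card_termUniv_aboxSize_le :
    (termUniv A (aboxSize A)).card ≤ 79 * (aboxSize A + 2) ^ 8 := by
  set s := aboxSize A
  set r := s + 2
  have hr : 1 ≤ r := by omega
  have hr₂ : r ≤ r ^ 2 := Nat.le_self_pow (by norm_num) r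
  have hw : (wordSet A s).card ≤ 2 * r ^ 2 := by
    have := card_aboxCpts_le A
    calc _ ≤ 2 * (r * (aboxCpts A).card) := card_wordSet_le A s
      _ ≤ 2 * (r * r) := by gcongr; omega
      _ = 2 * r ^ 2 := by ring
  have hob : (obUniv A s).card ≤ 3 * r ^ 4 := by
    have := card_obNames_le A
    calc _ ≤ r * (r * ((obNames A).card + (wordSet A s).card)) := card_obUniv_le A s
      _ ≤ r * (r * (r ^ 2 + 2 * r ^ 2)) := by gcongr; omega
      _ = 3 * r ^ 4 := by ring
  have hft : (ftUniv A s).card ≤ 3 * r ^ 4 := by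
    have := card_ftNames_le A
    calc _ ≤ r * (r * ((ftNames A).card + (wordSet A s).card)) := card_ftUniv_le A s
      _ ≤ r * (r * (r ^ 2 + 2 * r ^ 2)) := by gcongr; omega
      _ = 3 * r ^ 4 := by ring
  have hp : (ptermUniv A s).card ≤ 39 * r ^ 8 := by
    calc _ ≤ _ := card_ptermUniv_le A s
      _ ≤ 3 * (3 * r ^ 4 * (3 * r ^ 4)) + 3 * r ^ 4 * (2 * r ^ 2) + 3 * r ^ 4 * (2 * r ^ 2) := by
          gcongr
      _ ≤ 39 * r ^ 8 := by
          have : r ^ 6 ≤ r ^ 8 := Nat.pow_le_pow_right hr (by norm_num)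
          nlinarith
  have hA : A.card ≤ r ^ 8 :=
    (card_le_aboxSize A).trans ((Nat.le_add_right s 2).trans (Nat.le_self_pow (by norm_num) r))
  calc _ ≤ A.card + 2 * (ptermUniv A s).card := card_termUniv_le A s
    _ ≤ 79 * r ^ 8 := by omega

end Card

theorem length_le_card_of_insert_chain {α : Type*} (U : Finset α) {B : ℕ → Set α} {n : ℕ}
    (h : ∀ i < n, ∃ t ∈ U, t ∉ B i ∧ B (i + 1) = insert t (B i)) : n ≤ U.card := by
  classical
  have key : ∀ i ≤ n, i ≤ (U.filter (· ∈ B i)).card := by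
    intro i hi
    induction i with
    | zero => exact Nat.zero_le _
    | succ i ih =>
      obtain ⟨t, htU, htB, hB⟩ := h i hi
      refine (ih (by omega)).trans_lt (Finset.card_lt_card ⟨fun u hu => ?_, fun hsub => ?_⟩)
      · simp only [Finset.mem_filter, hB] at hu ⊢
        exact ⟨hu.1, .inr hu.2⟩
      · have : t ∈ U.filter (· ∈ B (i + 1)) := Finset.mem_filter.2 ⟨htU, hB ▸ Set.mem_insert t _⟩
        exact htB (Finset.mem_filter.1 (hsub this)).2
  exact (key n le_rfl).trans (Finset.card_filter_le _ _)

theorem steps_le_card {E : Term → Term → Prop} {A : Set Term} {U : Finset Term}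
    (hU : ∀ t ∈ Compl E A, t ∈ U) {n : ℕ} {B : ℕ → Set Term} (h0 : B 0 = A)
    (hstep : ∀ i < n, Step E A (B i) (B (i + 1))) : n ≤ U.card := by
  have hB : ∀ i ≤ n, B i ⊆ Compl E A := by
    intro i hi
    induction i with
    | zero => exact h0 ▸ subset_compl
    | succ i ih =>
      obtain ⟨t, hd, -, hBi⟩ := hstep i hi
      rw [hBi]
      exact Set.insert_subset (mem_compl_of_deriv (hd.mono (ih (by omega)))) (ih (by omega))
  refine length_le_card_of_insert_chain U (B := B) fun i hi => ?_
  obtain ⟨t, hd, htB, hBi⟩ := hstep i hi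
  exact ⟨t, hU t (mem_compl_of_deriv (hd.mono (hB i hi.le))), htB, hBi⟩

theorem tableaux_decides {E : Term → Term → Prop} (A : Finset Term) (hWF : ABoxWF ↑A)
    (Ax : Model → Prop) (hT : RulePreserves E ↑A (Bounded ↑A (aboxSize A)))
    (hS : ∀ M : Model, M.Good → M.SatAll ↑A → Ax M → RulePreserves E ↑A M.Holds)
    (hC : Ax (canonicalModel E ↑A)) :
    (∀ (n : ℕ) (B : ℕ → Set Term), B 0 = ↑A → (∀ i < n, Step E ↑A (B i) (B (i + 1))) →
        n ≤ 79 * 2 ^ 8 * (aboxSize A + 1) ^ 8) ∧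
      (HasClash (Compl E ↑A) ↔ ¬ ∃ M : Model, M.Good ∧ M.SatAll ↑A ∧ Ax M) := by
  refine ⟨fun n B h0 hstep => ?_, ⟨?_, fun h => ?_⟩⟩
  · have hU : ∀ t ∈ Compl E ↑A, t ∈ termUniv A (aboxSize A) := fun t ht =>
      mem_termUniv (depth_le_aboxSize A) hWF
        (bounded_of_mem_compl (depth_le_aboxSize A) hWF hT ht)
    calc n ≤ 79 * (aboxSize A + 2) ^ 8 :=
          (steps_le_card hU h0 hstep).trans (card_termUniv_aboxSize_le A)
      _ ≤ 79 * (2 * (aboxSize A + 1)) ^ 8 := by gcongr; omega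
      _ = 79 * 2 ^ 8 * (aboxSize A + 1) ^ 8 := by ring
  · rintro hcl ⟨M, hM, hA, hAx⟩
    exact Model.not_hasClash_compl hM hWF hA (hS M hM hA hAx) hcl
  · by_contra hnc
    exact h ⟨_, canonicalModel.good, canonicalModel.satAll hnc, hC⟩

theorem ruleSA_preserves {A : Set Term} {P : PTerm → Prop} {b d : ObName}
    (h : ∀ x, P (.rI b x) → P (.rI d x)) : RulePreserves (ruleSA b d) A P := by
  rintro _ _ ⟨x, rfl, rfl⟩
  exact h x

theorem ruleSX_preserves {A : Set Term} {P : PTerm → Prop} {y z : FtName}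
    (h : ∀ a, P (.rI a y) → P (.rI a z)) : RulePreserves (ruleSX y z) A P := by
  rintro _ _ ⟨a, rfl, rfl⟩
  exact h a

section Separation
variable {A : Set Term} {N : ℕ}

theorem bounded_rI_of_occurs_left (hWF : ABoxWF A) {b d : ObName} (hd : ObOccurs d A)
    {x : FtName} (h : Bounded A N (.rI b x)) : Bounded A N (.rI d x) := by
  obtain ⟨hd, hd₁, hd₂⟩ := obAdmissible_of_occurs (N := N) hWF hd
  have := h.2.1.bounds
  exact ⟨hd, h.2.1, by omega, by omega⟩

theorem bounded_rI_of_occurs_right (hWF : ABoxWF A) {y z : FtName} (hz : FtOccurs z A)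
    {a : ObName} (h : Bounded A N (.rI a y)) : Bounded A N (.rI a z) := by
  obtain ⟨hz, hz₁, hz₂⟩ := ftAdmissible_of_occurs (N := N) hWF hz
  have := h.1.bounds
  exact ⟨h.1, hz, by omega, by omega⟩

theorem Model.holds_rI_of_sepA {M : Model} (hM : M.Good) {b d : ObName} (hb : b.IsBase)
    (hd : d.IsBase) (hAx : ∀ x, M.I (M.oi b) x → M.I (M.oi d) x) {x : FtName}
    (h : M.Holds (.rI b x)) : M.Holds (.rI d x) := by
  have hx := isConcept_denF hM x
  rw [Holds, denO_of_isBase hb, genO_subset_iff hx.stableO, hx.2] at h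
  rw [Holds, denO_of_isBase hd, genO_subset_iff hx.stableO, hx.2]
  exact fun u hu => hAx u (h u hu)

theorem Model.holds_rI_of_sepX {M : Model} {y z : FtName} (hy : y.IsBase) (hz : z.IsBase)
    (hAx : ∀ a, M.I a (M.fi y) → M.I a (M.fi z)) {a : ObName}
    (h : M.Holds (.rI a y)) : M.Holds (.rI a z) := by
  rw [Holds, denF_of_isBase hy] at h
  rw [Holds, denF_of_isBase hz]
  intro u hu v hv
  rw [Set.mem_singleton_iff.1 hv]
  exact hAx u (h hu _ rfl)

end Separation

/-- The tableaux algorithm obtained by adding the rule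
`SA(b,d)` (from `b I x` infer `d I x`) — respectively the rule `SX(y,z)`
(from `a I y` infer `a I z`) — to the LE-ALC tableaux expansion rules is a
terminating (in polynomial time), sound and complete decision procedure for
the consistency of `A` together with the axiom `∀p (b I p ⇒ d I p)` —
respectively of `A` together with the axiom `∀p (p I y ⇒ p I z)`. -/
theorem separation_tableaux :
    ∃ c k : ℕ, ∀ A : Finset Term, ABoxWF ↑A →
      (∀ b d : ObName, ObOccurs b ↑A → ObOccurs d ↑A →
        (∀ (n : ℕ) (B : ℕ → Set Term), B 0 = ↑A →
            (∀ i < n, Step (ruleSA b d) ↑A (B i) (B (i + 1))) →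
            n ≤ c * (aboxSize A + 1) ^ k) ∧
        (HasClash (Compl (ruleSA b d) ↑A) ↔
          ¬ ∃ M : Model, M.Good ∧ M.SatAll ↑A ∧
              ∀ x : M.Ft, M.I (M.oi b) x → M.I (M.oi d) x)) ∧
      (∀ y z : FtName, FtOccurs y ↑A → FtOccurs z ↑A →
        (∀ (n : ℕ) (B : ℕ → Set Term), B 0 = ↑A →
            (∀ i < n, Step (ruleSX y z) ↑A (B i) (B (i + 1))) →
            n ≤ c * (aboxSize A + 1) ^ k) ∧
        (HasClash (Compl (ruleSX y z) ↑A) ↔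
          ¬ ∃ M : Model, M.Good ∧ M.SatAll ↑A ∧
              ∀ a : M.Ob, M.I a (M.fi y) → M.I a (M.fi z))) := by
  refine ⟨79 * 2 ^ 8, 8, fun A hWF => ⟨fun b d hb hd => ?_, fun y z hy hz => ?_⟩⟩
  · exact tableaux_decides A hWF (fun M => ∀ x, M.I (M.oi b) x → M.I (M.oi d) x)
      (ruleSA_preserves fun _ => bounded_rI_of_occurs_left hWF hd)
      (fun M hM _ hAx => ruleSA_preserves fun _ =>
        M.holds_rI_of_sepA hM (hb.isBase hWF) (hd.isBase hWF) hAx)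
      (fun _ h => mem_compl_of_deriv (.extra ⟨_, rfl, rfl⟩ h))
  · exact tableaux_decides A hWF (fun M => ∀ a, M.I a (M.fi y) → M.I a (M.fi z))
      (ruleSX_preserves fun _ => bounded_rI_of_occurs_right hWF hz)
      (fun M _ _ hAx => ruleSX_preserves fun _ =>
        M.holds_rI_of_sepX (hy.isBase hWF) (hz.isBase hWF) hAx)
      (fun _ h => mem_compl_of_deriv (.extra ⟨_, rfl, rfl⟩ h))

end LEALC
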